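/- arXiv:2001.06262 — 6 statements merged into one kernel-verified Lean document; each statement's English description precedes it below -/
import Mathlib

section
/- Let p ≥ 1, let (G_n) be a weight, and let (W_n) be a weak p-admissible weight with respect to (G_n), with associated sequences (n_k) and (ξ_k). Let (f_n) be a sequence in the Bochner space L_p(μ, X) which is a (W_n)-sequence (i.e. there is C > 0 such that for all m, ‖ max_{n_m < n ≤ n_{m+1}} ‖∑_{k=n_m+1}^n f_k‖_X ‖_{L_p} ≤ C ξ_m), and suppose sup_n ‖(1/G_n) ∑_{k=1}^n f_k‖_{L_p} < ∞. Then (1/W_n) ∑_{k=1}^n f_k converges to 0 almost everywhere, and sup_n (1/W_n) ‖∑_{k=1}^n f_k‖_X belongs to L_p(μ). -/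
open Filter Finset MeasureTheory

section helpers

private lemma real_iSup_Ioc_le {h : ℕ → ℝ} {a b : ℕ} {B : ℝ} (hB : 0 ≤ B)
    (hle : ∀ n ∈ Set.Ioc a b, h n ≤ B) : (⨆ n ∈ Set.Ioc a b, h n) ≤ B :=
  Real.iSup_le (fun n => Real.iSup_le (fun hn => hle n hn) hB) hB

private lemma real_le_iSup_Ioc {h : ℕ → ℝ} (hnn : ∀ n, 0 ≤ h n) {a b n : ℕ}
    (hn : n ∈ Set.Ioc a b) : h n ≤ ⨆ m ∈ Set.Ioc a b, h m := by
  have hbdd : BddAbove (Set.range fun m => ⨆ _ : m ∈ Set.Ioc a b, h m) := by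
    refine ⟨∑ i ∈ Finset.Ioc a b, h i, ?_⟩
    rintro x ⟨m, rfl⟩
    show (⨆ _ : m ∈ Set.Ioc a b, h m) ≤ _
    by_cases hm : m ∈ Set.Ioc a b
    · rw [ciSup_pos (f := fun _ => h m) hm]
      exact Finset.single_le_sum (fun i _ => hnn i) (Finset.mem_Ioc.2 hm)
    · haveI : IsEmpty (m ∈ Set.Ioc a b) := ⟨hm⟩
      rw [Real.iSup_of_isEmpty]
      exact Finset.sum_nonneg fun i _ => hnn i
  calc h n = ⨆ _ : n ∈ Set.Ioc a b, h n := (ciSup_pos (f := fun _ => h n) hn).symm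
    _ ≤ ⨆ m ∈ Set.Ioc a b, h m := le_ciSup hbdd n

private lemma add_rpow_le' {a b p : ℝ} (ha : 0 ≤ a) (hb : 0 ≤ b) (hp : 1 ≤ p) :
    (a + b) ^ p ≤ 2 ^ p * a ^ p + 2 ^ p * b ^ p := by
  have h1 : a + b ≤ 2 * max a b := by
    rcases le_total a b with h | h
    · rw [max_eq_right h]; linarith
    · rw [max_eq_left h]; linarith
  calc (a + b) ^ p ≤ (2 * max a b) ^ p :=
        Real.rpow_le_rpow (by positivity) h1 (by linarith)
    _ = 2 ^ p * (max a b) ^ p := Real.mul_rpow (by norm_num) (le_max_of_le_left ha)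
    _ ≤ 2 ^ p * (a ^ p + b ^ p) := by
        refine mul_le_mul_of_nonneg_left ?_ (Real.rpow_nonneg (by norm_num) p)
        rcases le_total a b with h | h
        · rw [max_eq_right h]; nlinarith [Real.rpow_nonneg ha p]
        · rw [max_eq_left h]; nlinarith [Real.rpow_nonneg hb p]
    _ = _ := by ring

private lemma exists_block {nk : ℕ → ℕ} (hnk : StrictMono nk) {M n : ℕ} (hn : nk M < n) :
    ∃ j, M ≤ j ∧ nk j < n ∧ n ≤ nk (j + 1) := by
  classical
  have hMn : M ≤ n := le_trans hnk.le_apply hn.le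
  set j := Nat.findGreatest (fun m => nk m < n) n with hj
  have hMj : M ≤ j := Nat.le_findGreatest hMn hn
  have hjP : nk j < n := Nat.findGreatest_spec (P := fun m => nk m < n) (m := M) hMn hn
  refine ⟨j, hMj, hjP, ?_⟩
  by_contra hcon
  push_neg at hcon
  have h3 : j + 1 ≤ nk (j + 1) := hnk.le_apply
  have h2 : j + 1 ≤ j := Nat.le_findGreatest (by omega) hcon
  omega

private lemma lint_bound {Ω : Type*} [MeasurableSpace Ω] {μ : Measure Ω} {p : ℝ}
    (hp : 1 ≤ p) {u : Ω → ℝ} (hu : ∀ ω, 0 ≤ u ω)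
    (hmem : MemLp u (ENNReal.ofReal p) μ) {b : ℝ}
    (hb : (∫ ω, u ω ^ p ∂μ) ^ (1 / p) ≤ b) :
    ∫⁻ ω, ENNReal.ofReal (u ω ^ p) ∂μ ≤ ENNReal.ofReal (b ^ p) := by
  have hp0 : (0:ℝ) < p := lt_of_lt_of_le one_pos hp
  have hint : Integrable (fun ω => u ω ^ p) μ := by
    have h := hmem.integrable_norm_rpow (by simp [ENNReal.ofReal_eq_zero]; linarith)
      ENNReal.ofReal_ne_top
    simpa [ENNReal.toReal_ofReal hp0.le, Real.norm_of_nonneg (hu _)] using h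
  have hnn : (0:ℝ) ≤ ∫ ω, u ω ^ p ∂μ :=
    integral_nonneg fun ω => Real.rpow_nonneg (hu ω) p
  rw [← ofReal_integral_eq_lintegral_ofReal hint
    (Filter.Eventually.of_forall fun ω => Real.rpow_nonneg (hu ω) p)]
  apply ENNReal.ofReal_le_ofReal
  have h1 : ((∫ ω, u ω ^ p ∂μ) ^ (1 / p)) ^ p ≤ b ^ p :=
    Real.rpow_le_rpow (Real.rpow_nonneg hnn _) hb hp0.le
  rwa [one_div, Real.rpow_inv_rpow hnn hp0.ne'] at h1
end helpers

/-- weighted SLLN (Theorem 3.1 of the paper). -/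
theorem stmt1 {Ω X : Type*} [MeasurableSpace Ω] [NormedAddCommGroup X] [NormedSpace ℝ X]
    (μ : Measure Ω) [IsProbabilityMeasure μ]
    (p : ℝ) (hp : 1 ≤ p)
    -- `(G n)` is a weight
    (G : ℕ → ℝ) (hGmono : Monotone G) (hG1 : 1 ≤ G 1) (hGtop : Tendsto G atTop atTop)
    -- `(W n)` is a weight, weak `p`-admissible w.r.t. `(G n)` with data `(n_k)`, `(ξ_k)`
    (W : ℕ → ℝ) (hWmono : Monotone W) (hW1 : 1 ≤ W 1) (hWtop : Tendsto W atTop atTop)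
    (nk : ℕ → ℕ) (hnk : StrictMono nk)
    (ξ : ℕ → ℝ) (hξpos : ∀ k, 0 < ξ k)
    (hadm1 : Summable (fun k => (G (nk k) / W (nk k)) ^ p))
    (hadm2 : Summable (fun k => (ξ k / W (nk k)) ^ p))
    -- `(f n)` is a `(W n)`-sequence in `L_p(μ, X)`
    (f : ℕ → Ω → X) (hf : ∀ n, MemLp (f n) (ENNReal.ofReal p) μ)
    (C : ℝ) (hC : 0 < C)
    (hWseq : ∀ m, (∫ ω, (⨆ n ∈ Set.Ioc (nk m) (nk (m + 1)),
        ‖∑ k ∈ Finset.Icc (nk m + 1) n, f k ω‖) ^ p ∂μ) ^ (1 / p) ≤ C * ξ m)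
    -- uniform boundedness of the `G`-normalized sums in `L_p`
    (K : ℝ)
    (hK : ∀ n, (∫ ω, ‖(G n)⁻¹ • ∑ k ∈ Finset.Icc 1 n, f k ω‖ ^ p ∂μ) ^ (1 / p) ≤ K) :
    (∀ᵐ ω ∂μ, Tendsto (fun n => (W n)⁻¹ • ∑ k ∈ Finset.Icc 1 n, f k ω) atTop (nhds 0)) ∧
      MemLp (fun ω => ⨆ n, (W n)⁻¹ * ‖∑ k ∈ Finset.Icc 1 n, f k ω‖)
        (ENNReal.ofReal p) μ := by
  classical
  have hp0 : (0:ℝ) < p := lt_of_lt_of_le one_pos hp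
  have hpne : ENNReal.ofReal p ≠ 0 := by simp [ENNReal.ofReal_eq_zero]; linarith
  -- positivity of weights
  have hnkpos : ∀ j : ℕ, 1 ≤ j → 1 ≤ nk j :=
    fun j hj => Nat.succ_le_of_lt (lt_of_le_of_lt (Nat.zero_le (nk 0)) (hnk hj))
  have hW1' : ∀ n : ℕ, 1 ≤ n → 1 ≤ W n := fun n hn => hW1.trans (hWmono hn)
  have hG1' : ∀ n : ℕ, 1 ≤ n → 1 ≤ G n := fun n hn => hG1.trans (hGmono hn)
  have hWnk : ∀ j : ℕ, 1 ≤ j → 1 ≤ W (nk j) := fun j hj => hW1' _ (hnkpos j hj)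
  have hGnk : ∀ j : ℕ, 1 ≤ j → 1 ≤ G (nk j) := fun j hj => hG1' _ (hnkpos j hj)
  -- abbreviations (no occurrence in the goal, purely local)
  set T' : ℕ → Ω → ℝ := fun m ω => ⨆ n ∈ Set.Ioc (nk m) (nk (m + 1)),
      ‖∑ k ∈ Finset.Icc (nk m + 1) n, f k ω‖ with hT'def
  set al : ℕ → Ω → ℝ := fun j ω => (W (nk j))⁻¹ * ‖∑ k ∈ Finset.Icc 1 (nk j), f k ω‖ with haldef
  set ga : ℕ → Ω → ℝ := fun j ω => (W (nk j))⁻¹ * T' j ω with hgadef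
  set φ : ℕ → Ω → ENNReal := fun m ω => ENNReal.ofReal ((al (m+1) ω + ga (m+1) ω) ^ p)
    with hφdef
  -- basic membership / measurability
  have hPmem : ∀ a n : ℕ, MemLp (fun ω => ∑ k ∈ Finset.Icc a n, f k ω) (ENNReal.ofReal p) μ :=
    fun a n => memLp_finset_sum _ fun i _ => hf i
  have hSmeas : ∀ n : ℕ, AEMeasurable (fun ω => ‖∑ k ∈ Finset.Icc 1 n, f k ω‖) μ :=
    fun n => ((hPmem 1 n).1.norm).aemeasurable
  have hT'nn : ∀ m ω, 0 ≤ T' m ω := fun m ω =>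
    Real.iSup_nonneg fun n => Real.iSup_nonneg fun _ => norm_nonneg _
  have hT'meas : ∀ m, AEMeasurable (T' m) μ := by
    intro m
    apply AEMeasurable.iSup
    intro n
    by_cases hn : n ∈ Set.Ioc (nk m) (nk (m + 1))
    · have he : (fun ω => ⨆ _ : n ∈ Set.Ioc (nk m) (nk (m + 1)),
          ‖∑ k ∈ Finset.Icc (nk m + 1) n, f k ω‖)
          = fun ω => ‖∑ k ∈ Finset.Icc (nk m + 1) n, f k ω‖ :=
        funext fun ω => ciSup_pos (f := fun _ => ‖∑ k ∈ Finset.Icc (nk m + 1) n, f k ω‖) hn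
      rw [he]
      exact ((hPmem _ n).1.norm).aemeasurable
    · haveI : IsEmpty (n ∈ Set.Ioc (nk m) (nk (m + 1))) := ⟨hn⟩
      have he : (fun ω => ⨆ _ : n ∈ Set.Ioc (nk m) (nk (m + 1)),
          ‖∑ k ∈ Finset.Icc (nk m + 1) n, f k ω‖) = fun _ => (0:ℝ) :=
        funext fun ω => Real.iSup_of_isEmpty _
      rw [he]
      exact aemeasurable_const
  have hT'mem : ∀ m, MemLp (T' m) (ENNReal.ofReal p) μ := by
    intro m
    have hg : MemLp (fun ω => ∑ n ∈ Finset.Ioc (nk m) (nk (m + 1)),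
        ‖∑ k ∈ Finset.Icc (nk m + 1) n, f k ω‖) (ENNReal.ofReal p) μ :=
      memLp_finset_sum _ fun i _ => (hPmem _ i).norm
    refine hg.of_le (hT'meas m).aestronglyMeasurable ?_
    refine Filter.Eventually.of_forall fun ω => ?_
    rw [Real.norm_of_nonneg (hT'nn m ω)]
    have hgnn : 0 ≤ ∑ n ∈ Finset.Ioc (nk m) (nk (m + 1)),
        ‖∑ k ∈ Finset.Icc (nk m + 1) n, f k ω‖ :=
      Finset.sum_nonneg fun i _ => norm_nonneg _
    refine le_trans (real_iSup_Ioc_le hgnn fun n hn =>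
      Finset.single_le_sum (f := fun i => ‖∑ k ∈ Finset.Icc (nk m + 1) i, f k ω‖)
        (fun i _ => norm_nonneg _) (Finset.mem_Ioc.2 hn)) (le_abs_self _)
  -- lintegral bounds
  have hT'lint : ∀ m, ∫⁻ ω, ENNReal.ofReal (T' m ω ^ p) ∂μ ≤ ENNReal.ofReal ((C * ξ m) ^ p) :=
    fun m => lint_bound hp (hT'nn m) (hT'mem m) (hWseq m)
  have hGlint : ∀ n, ∫⁻ ω, ENNReal.ofReal (‖(G n)⁻¹ • ∑ k ∈ Finset.Icc 1 n, f k ω‖ ^ p) ∂μ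
      ≤ ENNReal.ofReal (K ^ p) :=
    fun n => lint_bound hp (fun ω => norm_nonneg _) (((hPmem 1 n).const_smul _).norm) (hK n)
  -- lintegral bound for the `al` part
  have hallint : ∀ j : ℕ, 1 ≤ j → ∫⁻ ω, ENNReal.ofReal (al j ω ^ p) ∂μ
      ≤ ENNReal.ofReal ((G (nk j) / W (nk j)) ^ p * K ^ p) := by
    intro j hj
    have hGpos : (0:ℝ) < G (nk j) := lt_of_lt_of_le one_pos (hGnk j hj)
    have hWpos : (0:ℝ) < W (nk j) := lt_of_lt_of_le one_pos (hWnk j hj)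
    have key : ∀ ω, al j ω ^ p = (G (nk j) / W (nk j)) ^ p *
        ‖(G (nk j))⁻¹ • ∑ k ∈ Finset.Icc 1 (nk j), f k ω‖ ^ p := by
      intro ω
      rw [norm_smul, Real.norm_eq_abs, abs_of_nonneg (by positivity : (0:ℝ) ≤ (G (nk j))⁻¹),
        ← Real.mul_rpow (by positivity) (by positivity), haldef]
      congr 1
      simp only []
      field_simp
    simp_rw [key]
    calc ∫⁻ ω, ENNReal.ofReal ((G (nk j) / W (nk j)) ^ p *
          ‖(G (nk j))⁻¹ • ∑ k ∈ Finset.Icc 1 (nk j), f k ω‖ ^ p) ∂μ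
        = ENNReal.ofReal ((G (nk j) / W (nk j)) ^ p) *
          ∫⁻ ω, ENNReal.ofReal (‖(G (nk j))⁻¹ • ∑ k ∈ Finset.Icc 1 (nk j), f k ω‖ ^ p) ∂μ := by
          simp_rw [ENNReal.ofReal_mul (by positivity : (0:ℝ) ≤ (G (nk j) / W (nk j)) ^ p)]
          rw [lintegral_const_mul' _ _ ENNReal.ofReal_ne_top]
      _ ≤ ENNReal.ofReal ((G (nk j) / W (nk j)) ^ p) * ENNReal.ofReal (K ^ p) :=
          mul_le_mul_right (hGlint _) _
      _ = ENNReal.ofReal ((G (nk j) / W (nk j)) ^ p * K ^ p) :=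
          (ENNReal.ofReal_mul (by positivity)).symm
  have hgalint : ∀ j : ℕ, 1 ≤ j → ∫⁻ ω, ENNReal.ofReal (ga j ω ^ p) ∂μ
      ≤ ENNReal.ofReal ((W (nk j))⁻¹ ^ p * (C * ξ j) ^ p) := by
    intro j hj
    have hWpos : (0:ℝ) < W (nk j) := lt_of_lt_of_le one_pos (hWnk j hj)
    have key : ∀ ω, ga j ω ^ p = (W (nk j))⁻¹ ^ p * T' j ω ^ p := by
      intro ω
      rw [hgadef]
      exact Real.mul_rpow (by positivity) (hT'nn j ω)
    simp_rw [key]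
    calc ∫⁻ ω, ENNReal.ofReal ((W (nk j))⁻¹ ^ p * T' j ω ^ p) ∂μ
        = ENNReal.ofReal ((W (nk j))⁻¹ ^ p) * ∫⁻ ω, ENNReal.ofReal (T' j ω ^ p) ∂μ := by
          simp_rw [ENNReal.ofReal_mul (by positivity : (0:ℝ) ≤ (W (nk j))⁻¹ ^ p)]
          rw [lintegral_const_mul' _ _ ENNReal.ofReal_ne_top]
      _ ≤ ENNReal.ofReal ((W (nk j))⁻¹ ^ p) * ENNReal.ofReal ((C * ξ j) ^ p) :=
          mul_le_mul_right (hT'lint _) _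
      _ = ENNReal.ofReal ((W (nk j))⁻¹ ^ p * (C * ξ j) ^ p) :=
          (ENNReal.ofReal_mul (by positivity)).symm
  -- nonnegativity of al, ga for j ≥ 1
  have halnn : ∀ j : ℕ, 1 ≤ j → ∀ ω, 0 ≤ al j ω := by
    intro j hj ω
    have hWpos : (0:ℝ) < W (nk j) := lt_of_lt_of_le one_pos (hWnk j hj)
    rw [haldef]
    positivity
  have hgann : ∀ j : ℕ, 1 ≤ j → ∀ ω, 0 ≤ ga j ω := by
    intro j hj ω
    have hWpos : (0:ℝ) < W (nk j) := lt_of_lt_of_le one_pos (hWnk j hj)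
    rw [hgadef]
    exact mul_nonneg (by positivity) (hT'nn j ω)
  -- measurability of al, ga, φ
  have halmeas : ∀ j, AEMeasurable (al j) μ := fun j => (hSmeas (nk j)).const_mul _
  have hgameas : ∀ j, AEMeasurable (ga j) μ := fun j => (hT'meas j).const_mul _
  have hφmeas : ∀ m, AEMeasurable (φ m) μ := by
    intro m
    refine ENNReal.measurable_ofReal.comp_aemeasurable ?_
    exact ((Real.continuous_rpow_const hp0.le).measurable).comp_aemeasurable
      ((halmeas (m+1)).add (hgameas (m+1)))
  -- bound for ∫⁻ φ m
  have hφlint : ∀ m, ∫⁻ ω, φ m ω ∂μ ≤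
      ENNReal.ofReal (2 ^ p * ((G (nk (m+1)) / W (nk (m+1))) ^ p * K ^ p)) +
      ENNReal.ofReal (2 ^ p * ((W (nk (m+1)))⁻¹ ^ p * (C * ξ (m+1)) ^ p)) := by
    intro m
    have h1 : ∀ ω, φ m ω ≤ ENNReal.ofReal (2 ^ p * al (m+1) ω ^ p)
        + ENNReal.ofReal (2 ^ p * ga (m+1) ω ^ p) := by
      intro ω
      rw [hφdef]
      simp only []
      rw [← ENNReal.ofReal_add
        (mul_nonneg (by positivity) (Real.rpow_nonneg (halnn (m+1) (by omega) ω) p))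
        (mul_nonneg (by positivity) (Real.rpow_nonneg (hgann (m+1) (by omega) ω) p))]
      exact ENNReal.ofReal_le_ofReal
        (add_rpow_le' (halnn (m+1) (by omega) ω) (hgann (m+1) (by omega) ω) hp)
    calc ∫⁻ ω, φ m ω ∂μ ≤ ∫⁻ ω, (ENNReal.ofReal (2 ^ p * al (m+1) ω ^ p)
          + ENNReal.ofReal (2 ^ p * ga (m+1) ω ^ p)) ∂μ := lintegral_mono h1
      _ = (∫⁻ ω, ENNReal.ofReal (2 ^ p * al (m+1) ω ^ p) ∂μ)
          + ∫⁻ ω, ENNReal.ofReal (2 ^ p * ga (m+1) ω ^ p) ∂μ := by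
          refine lintegral_add_left' ?_ _
          refine ENNReal.measurable_ofReal.comp_aemeasurable ?_
          exact (measurable_const.mul ((Real.continuous_rpow_const hp0.le).measurable)).comp_aemeasurable
            (halmeas (m+1))
      _ ≤ ENNReal.ofReal (2 ^ p * ((G (nk (m+1)) / W (nk (m+1))) ^ p * K ^ p)) +
          ENNReal.ofReal (2 ^ p * ((W (nk (m+1)))⁻¹ ^ p * (C * ξ (m+1)) ^ p)) := by
          gcongr ?_ + ?_
          · calc ∫⁻ ω, ENNReal.ofReal (2 ^ p * al (m+1) ω ^ p) ∂μ
                = ENNReal.ofReal (2 ^ p) * ∫⁻ ω, ENNReal.ofReal (al (m+1) ω ^ p) ∂μ := by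
                  simp_rw [ENNReal.ofReal_mul (by positivity : (0:ℝ) ≤ (2:ℝ) ^ p)]
                  rw [lintegral_const_mul' _ _ ENNReal.ofReal_ne_top]
              _ ≤ ENNReal.ofReal (2 ^ p) *
                  ENNReal.ofReal ((G (nk (m+1)) / W (nk (m+1))) ^ p * K ^ p) :=
                  mul_le_mul_right (hallint (m+1) (by omega)) _
              _ = _ := (ENNReal.ofReal_mul (by positivity)).symm
          · calc ∫⁻ ω, ENNReal.ofReal (2 ^ p * ga (m+1) ω ^ p) ∂μ
                = ENNReal.ofReal (2 ^ p) * ∫⁻ ω, ENNReal.ofReal (ga (m+1) ω ^ p) ∂μ := by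
                  simp_rw [ENNReal.ofReal_mul (by positivity : (0:ℝ) ≤ (2:ℝ) ^ p)]
                  rw [lintegral_const_mul' _ _ ENNReal.ofReal_ne_top]
              _ ≤ ENNReal.ofReal (2 ^ p) *
                  ENNReal.ofReal ((W (nk (m+1)))⁻¹ ^ p * (C * ξ (m+1)) ^ p) :=
                  mul_le_mul_right (hgalint (m+1) (by omega)) _
              _ = _ := (ENNReal.ofReal_mul (by positivity)).symm
  -- summability of the bounds
  have hKnn : 0 ≤ K := le_trans (Real.rpow_nonneg
    (integral_nonneg fun ω => Real.rpow_nonneg (norm_nonneg _) p) _) (hK 1)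
  have hsum1 : Summable (fun m => 2 ^ p * ((G (nk (m+1)) / W (nk (m+1))) ^ p * K ^ p)) := by
    have h := (((summable_nat_add_iff 1).mpr hadm1).mul_left (2 ^ p * K ^ p))
    refine h.congr fun m => ?_
    ring
  have hsum2 : Summable (fun m => 2 ^ p * ((W (nk (m+1)))⁻¹ ^ p * (C * ξ (m+1)) ^ p)) := by
    have h := (((summable_nat_add_iff 1).mpr hadm2).mul_left (2 ^ p * C ^ p))
    refine h.congr fun m => ?_
    have hWpos : (0:ℝ) < W (nk (m+1)) := lt_of_lt_of_le one_pos (hWnk (m+1) (by omega))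
    rw [Real.div_rpow (hξpos (m+1)).le hWpos.le, Real.mul_rpow hC.le (hξpos (m+1)).le,
      Real.inv_rpow hWpos.le]
    field_simp
  have hB1nn : ∀ m : ℕ, (0:ℝ) ≤ 2 ^ p * ((G (nk (m+1)) / W (nk (m+1))) ^ p * K ^ p) := by
    intro m
    have hWpos : (0:ℝ) < W (nk (m+1)) := lt_of_lt_of_le one_pos (hWnk (m+1) (by omega))
    have hGpos : (0:ℝ) < G (nk (m+1)) := lt_of_lt_of_le one_pos (hGnk (m+1) (by omega))
    positivity
  have hB2nn : ∀ m : ℕ, (0:ℝ) ≤ 2 ^ p * ((W (nk (m+1)))⁻¹ ^ p * (C * ξ (m+1)) ^ p) := by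
    intro m
    have hWpos : (0:ℝ) < W (nk (m+1)) := lt_of_lt_of_le one_pos (hWnk (m+1) (by omega))
    have := (hξpos (m+1))
    positivity
  -- total finiteness
  have hΦfin : ∫⁻ ω, ∑' m, φ m ω ∂μ ≠ ⊤ := by
    rw [lintegral_tsum hφmeas]
    have h1 : ∑' m, ∫⁻ ω, φ m ω ∂μ ≤
        ∑' m, (ENNReal.ofReal (2 ^ p * ((G (nk (m+1)) / W (nk (m+1))) ^ p * K ^ p)) +
          ENNReal.ofReal (2 ^ p * ((W (nk (m+1)))⁻¹ ^ p * (C * ξ (m+1)) ^ p))) :=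
      ENNReal.tsum_le_tsum hφlint
    rw [ENNReal.tsum_add, ← ENNReal.ofReal_tsum_of_nonneg hB1nn hsum1,
      ← ENNReal.ofReal_tsum_of_nonneg hB2nn hsum2] at h1
    exact (lt_of_le_of_lt h1 (ENNReal.add_lt_top.mpr ⟨ENNReal.ofReal_lt_top,
      ENNReal.ofReal_lt_top⟩)).ne
  have hΦmeas : AEMeasurable (fun ω => ∑' m, φ m ω) μ := AEMeasurable.ennreal_tsum hφmeas
  have hae : ∀ᵐ ω ∂μ, ∑' m, φ m ω < ⊤ := ae_lt_top' hΦmeas hΦfin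
  -- the block estimate
  have hblock : ∀ (ω : Ω) (j : ℕ), 1 ≤ j → ∀ n, nk j < n → n ≤ nk (j + 1) →
      (W n)⁻¹ * ‖∑ k ∈ Finset.Icc 1 n, f k ω‖ ≤ al j ω + ga j ω := by
    intro ω j hj n hn1 hn2
    have hWj : (0:ℝ) < W (nk j) := lt_of_lt_of_le one_pos (hWnk j hj)
    have hWn : W (nk j) ≤ W n := hWmono hn1.le
    have hWnpos : (0:ℝ) < W n := lt_of_lt_of_le hWj hWn
    have hIcc1 : ∀ a : ℕ, Finset.Icc (a + 1) n = Finset.Ioc a n := by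
      intro a; ext x; simp [Finset.mem_Icc, Finset.mem_Ioc]
    have hIcc2 : ∀ b : ℕ, Finset.Icc 1 b = Finset.Ioc 0 b := by
      intro b; ext x; simp [Finset.mem_Icc, Finset.mem_Ioc]; omega
    have hsplit : ∑ k ∈ Finset.Icc 1 n, f k ω
        = (∑ k ∈ Finset.Icc 1 (nk j), f k ω) + ∑ k ∈ Finset.Icc (nk j + 1) n, f k ω := by
      rw [hIcc2 n, hIcc2 (nk j), hIcc1 (nk j)]
      exact (Finset.sum_Ioc_consecutive _ (Nat.zero_le _) hn1.le).symm
    have hle1 : ‖∑ k ∈ Finset.Icc (nk j + 1) n, f k ω‖ ≤ T' j ω :=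
      real_le_iSup_Ioc (h := fun i => ‖∑ k ∈ Finset.Icc (nk j + 1) i, f k ω‖)
        (fun i => norm_nonneg _) ⟨hn1, hn2⟩
    calc (W n)⁻¹ * ‖∑ k ∈ Finset.Icc 1 n, f k ω‖
        ≤ (W (nk j))⁻¹ * ‖∑ k ∈ Finset.Icc 1 n, f k ω‖ := by
          apply mul_le_mul_of_nonneg_right _ (norm_nonneg _)
          exact inv_anti₀ hWj hWn
      _ ≤ (W (nk j))⁻¹ * (‖∑ k ∈ Finset.Icc 1 (nk j), f k ω‖
            + ‖∑ k ∈ Finset.Icc (nk j + 1) n, f k ω‖) := by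
          apply mul_le_mul_of_nonneg_left _ (by positivity)
          rw [hsplit]
          exact norm_add_le _ _
      _ ≤ (W (nk j))⁻¹ * (‖∑ k ∈ Finset.Icc 1 (nk j), f k ω‖ + T' j ω) := by
          apply mul_le_mul_of_nonneg_left _ (by positivity)
          linarith
      _ = al j ω + ga j ω := by rw [haldef, hgadef]; ring
  -- nonnegativity of the normalized sums
  have hTnn : ∀ (ω : Ω) (n : ℕ), 0 ≤ (W n)⁻¹ * ‖∑ k ∈ Finset.Icc 1 n, f k ω‖ := by
    intro ω n
    rcases Nat.eq_zero_or_pos n with h0 | h1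
    · subst h0
      rw [show Finset.Icc 1 0 = (∅ : Finset ℕ) from Finset.Icc_eq_empty (by omega)]
      simp
    · have hWn : (0:ℝ) < W n := lt_of_lt_of_le one_pos (hW1' n h1)
      positivity
  constructor
  · -- a.e. convergence
    filter_upwards [hae] with ω hΦ
    have h0 : Tendsto (fun m => φ m ω) atTop (nhds 0) :=
      ENNReal.tendsto_atTop_zero_of_tsum_ne_top hΦ.ne
    have h0' : Tendsto (fun m => al (m+1) ω + ga (m+1) ω) atTop (nhds 0) := by
      have h2 : Tendsto (fun m => (φ m ω).toReal) atTop (nhds 0) := by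
        have h2' := (ENNReal.tendsto_toReal (by simp : (0:ENNReal) ≠ ⊤)).comp h0
        exact h2'
      have h3 := h2.rpow_const (p := 1/p) (Or.inr (by positivity))
      rw [Real.zero_rpow (by positivity : 1/p ≠ (0:ℝ))] at h3
      refine h3.congr fun m => ?_
      rw [hφdef]
      simp only []
      rw [ENNReal.toReal_ofReal (Real.rpow_nonneg
          (add_nonneg (halnn _ (by omega) ω) (hgann _ (by omega) ω)) p),
        one_div, Real.rpow_rpow_inv
          (add_nonneg (halnn _ (by omega) ω) (hgann _ (by omega) ω)) hp0.ne']
    apply squeeze_zero_norm (a := fun n => (W n)⁻¹ * ‖∑ k ∈ Finset.Icc 1 n, f k ω‖)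
    · intro n
      rcases Nat.eq_zero_or_pos n with h0'' | h1
      · subst h0''
        rw [show Finset.Icc 1 0 = (∅ : Finset ℕ) from Finset.Icc_eq_empty (by omega)]
        simp
      · have hWn : (0:ℝ) < W n := lt_of_lt_of_le one_pos (hW1' n h1)
        rw [norm_smul, Real.norm_eq_abs, abs_of_nonneg (inv_nonneg.mpr hWn.le)]
    · rw [Metric.tendsto_atTop] at h0' ⊢
      intro ε hε
      obtain ⟨M, hM⟩ := h0' ε hε
      refine ⟨nk (M+1) + 1, fun n hn => ?_⟩
      obtain ⟨j, hjM, hj1, hj2⟩ := exists_block hnk (M := M+1) (n := n) (by omega)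
      obtain ⟨m, rfl⟩ : ∃ m, j = m + 1 := ⟨j - 1, by omega⟩
      have hb := hblock ω (m+1) (by omega) n hj1 hj2
      have hMm := hM m (by omega)
      rw [Real.dist_eq, sub_zero] at hMm ⊢
      rw [abs_of_nonneg (hTnn ω n)]
      rw [abs_of_nonneg (add_nonneg (halnn _ (by omega) ω) (hgann _ (by omega) ω))] at hMm
      linarith
  · -- MemLp of the maximal function
    have hFmeas : AEStronglyMeasurable
        (fun ω => ⨆ n, (W n)⁻¹ * ‖∑ k ∈ Finset.Icc 1 n, f k ω‖) μ :=
      (AEMeasurable.iSup fun n => (hSmeas n).const_mul _).aestronglyMeasurable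
    have hΨmeas : AEMeasurable (fun ω => ((∑' m, φ m ω).toReal) ^ (1/p)) μ :=
      ((Real.continuous_rpow_const (by positivity)).measurable).comp_aemeasurable
        hΦmeas.ennreal_toReal
    have hΨmem : MemLp (fun ω => ((∑' m, φ m ω).toReal) ^ (1/p)) (ENNReal.ofReal p) μ := by
      refine ⟨hΨmeas.aestronglyMeasurable, ?_⟩
      rw [eLpNorm_eq_lintegral_rpow_enorm_toReal hpne ENNReal.ofReal_ne_top,
        ENNReal.toReal_ofReal hp0.le]
      refine ENNReal.rpow_lt_top_of_nonneg (by positivity) ?_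
      have hcong : ∫⁻ ω, ‖((∑' m, φ m ω).toReal) ^ (1/p)‖ₑ ^ p ∂μ
          = ∫⁻ ω, ∑' m, φ m ω ∂μ := by
        refine lintegral_congr_ae ?_
        filter_upwards [hae] with ω hΦ
        rw [Real.enorm_eq_ofReal (Real.rpow_nonneg ENNReal.toReal_nonneg _),
          ← ENNReal.ofReal_rpow_of_nonneg ENNReal.toReal_nonneg (by positivity : (0:ℝ) ≤ 1/p),
          ENNReal.ofReal_toReal hΦ.ne, ← ENNReal.rpow_mul,
          one_div_mul_cancel hp0.ne', ENNReal.rpow_one]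
      rw [hcong]
      exact hΦfin
    have hEmem : MemLp (fun ω => ∑ i ∈ Finset.range (nk 1 + 1),
        (W i)⁻¹ * ‖∑ k ∈ Finset.Icc 1 i, f k ω‖) (ENNReal.ofReal p) μ :=
      memLp_finset_sum _ fun i _ => ((hPmem 1 i).norm.const_mul _)
    refine (hEmem.add hΨmem).of_le hFmeas ?_
    filter_upwards [hae] with ω hΦ
    have hkey : ∀ m : ℕ, al (m+1) ω + ga (m+1) ω ≤ ((∑' m', φ m' ω).toReal) ^ (1/p) := by
      intro m
      have hnn : 0 ≤ al (m+1) ω + ga (m+1) ω :=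
        add_nonneg (halnn _ (by omega) ω) (hgann _ (by omega) ω)
      have h3 := ENNReal.toReal_mono hΦ.ne (ENNReal.le_tsum (f := fun m' => φ m' ω) m)
      simp only [hφdef] at h3
      rw [ENNReal.toReal_ofReal (Real.rpow_nonneg hnn p)] at h3
      calc al (m+1) ω + ga (m+1) ω
          = ((al (m+1) ω + ga (m+1) ω) ^ p) ^ (1/p) := by
            rw [one_div, Real.rpow_rpow_inv hnn hp0.ne']
        _ ≤ ((∑' m', φ m' ω).toReal) ^ (1/p) :=
            Real.rpow_le_rpow (Real.rpow_nonneg hnn p) h3 (by positivity)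
    have hEnn : 0 ≤ ∑ i ∈ Finset.range (nk 1 + 1),
        (W i)⁻¹ * ‖∑ k ∈ Finset.Icc 1 i, f k ω‖ :=
      Finset.sum_nonneg fun i _ => hTnn ω i
    have hΨnn : 0 ≤ ((∑' m', φ m' ω).toReal) ^ (1/p) :=
      Real.rpow_nonneg ENNReal.toReal_nonneg _
    simp only [Pi.add_apply]
    rw [Real.norm_of_nonneg (Real.iSup_nonneg (hTnn ω)), Real.norm_eq_abs]
    refine le_trans (Real.iSup_le ?_ (by linarith)) (le_abs_self _)
    intro n
    by_cases hn : n ≤ nk 1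
    · have hle := Finset.single_le_sum
        (f := fun i => (W i)⁻¹ * ‖∑ k ∈ Finset.Icc 1 i, f k ω‖)
        (fun i hi => hTnn ω i)
        (show n ∈ Finset.range (nk 1 + 1) from Finset.mem_range.2 (by omega))
      exact le_trans hle (by linarith)
    · obtain ⟨j, hj1', hj1, hj2⟩ := exists_block hnk (M := 1) (n := n) (by omega)
      obtain ⟨m, rfl⟩ : ∃ m, j = m + 1 := ⟨j - 1, by omega⟩
      have hb := hblock ω (m+1) (by omega) n hj1 hj2
      have h1 := hkey m
      linarith
end

section
/- Let p ≥ 1, (G_n) a weight, (W_n) a weak p-admissible weight w.r.t. (G_n), and (f_n) ⊂ L_p(μ, X) a (W_n)-sequence with sup_n ‖(1/G_n) ∑_{k=1}^n f_k‖_{L_p} = K < ∞. If in addition ∑_{n=1}^∞ (G_n/W_n)(1 − W_n/W_{n+1}) < ∞, then the series ∑_{k=1}^∞ f_k/W_k converges almost everywhere and in L_p-norm, and sup_n ‖∑_{k=1}^n f_k/W_k‖_X ∈ L_p(μ). -/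
open Filter Finset MeasureTheory

open scoped ENNReal NNReal Topology

lemma ofReal_norm_eq_coe_nnnorm {E : Type*} [SeminormedAddCommGroup E] (x : E) :
    ENNReal.ofReal ‖x‖ = (‖x‖₊ : ℝ≥0∞) := ofReal_norm x

lemma Real.ennnorm_eq_ofReal {r : ℝ} (hr : 0 ≤ r) : (‖r‖₊ : ℝ≥0∞) = ENNReal.ofReal r :=
  Real.enorm_eq_ofReal hr

lemma eLpNorm_eq_lintegral_rpow_nnnorm {α E : Type*} [MeasurableSpace α] {μ : Measure α}
    [SeminormedAddCommGroup E] {p : ℝ≥0∞} (hp_ne_zero : p ≠ 0) (hp_ne_top : p ≠ ∞)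
    {f : α → E} :
    eLpNorm f p μ = (∫⁻ x, (‖f x‖₊ : ℝ≥0∞) ^ p.toReal ∂μ) ^ (1 / p.toReal) :=
  eLpNorm_eq_lintegral_rpow_enorm_toReal hp_ne_zero hp_ne_top

section Stmt3Helpers
variable {Ω : Type*} [MeasurableSpace Ω] {μ : MeasureTheory.Measure Ω}

lemma myReal_iSup_eq_toReal (a : ℕ → ℝ) (ha : ∀ n, 0 ≤ a n) :
    (⨆ n, a n) = (⨆ n, ENNReal.ofReal (a n)).toReal := by
  by_cases h : BddAbove (Set.range a)
  · have key : ENNReal.ofReal (⨆ n, a n) = ⨆ n, ENNReal.ofReal (a n) :=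
      Monotone.map_ciSup_of_continuousAt (ENNReal.continuous_ofReal.continuousAt)
        (fun _ _ hxy => ENNReal.ofReal_le_ofReal hxy) h
    rw [← key, ENNReal.toReal_ofReal (Real.iSup_nonneg ha)]
  · rw [Real.iSup_of_not_bddAbove h]
    have : (⨆ n, ENNReal.ofReal (a n)) = ⊤ := by
      rw [iSup_eq_top]
      intro b hb
      obtain ⟨y, ⟨n, rfl⟩, hy⟩ := not_bddAbove_iff.mp h b.toReal
      exact ⟨n, (ENNReal.lt_ofReal_iff_toReal_lt hb.ne).mpr hy⟩
    simp [this]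

lemma myPropSup_neg {P : Prop} (hP : ¬P) (c : P → ℝ) : (⨆ h : P, c h) = 0 := by
  haveI : IsEmpty P := ⟨hP⟩
  exact Real.iSup_of_isEmpty _

lemma myAddRpow (x y : ℝ≥0∞) {p : ℝ} (hp : 0 ≤ p) : (x+y)^p ≤ 2^p * (x^p + y^p) := by
  have h1 : x + y ≤ 2 * max x y := by
    rw [two_mul]
    exact add_le_add (le_max_left x y) (le_max_right x y)
  calc (x+y)^p ≤ (2 * max x y)^p := ENNReal.rpow_le_rpow h1 hp
    _ = 2^p * (max x y)^p := ENNReal.mul_rpow_of_nonneg _ _ hp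
    _ ≤ 2^p * (x^p + y^p) := by
        refine mul_le_mul_right ?_ _
        rcases max_cases x y with ⟨h, _⟩ | ⟨h, _⟩ <;> rw [h]
        · exact le_self_add
        · exact le_add_self

lemma myPhi_sum_le {p : ℝ} (hp : 1 ≤ p) {ι : Type*} (s : Finset ι) (u : ι → Ω → ℝ≥0∞)
    (hu : ∀ i, AEMeasurable (u i) μ) :
    (∫⁻ ω, (∑ i ∈ s, u i ω) ^ p ∂μ) ^ (1/p) ≤ ∑ i ∈ s, (∫⁻ ω, u i ω ^ p ∂μ) ^ (1/p) := by
  classical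
  induction s using Finset.induction_on with
  | empty =>
      have hp0 : (0:ℝ) < p := lt_of_lt_of_le zero_lt_one hp
      have hp1 : (0:ℝ) < 1/p := by positivity
      simp [ENNReal.zero_rpow_of_pos, hp0, hp1]
  | @insert a s' hx ih =>
      simp only [Finset.sum_insert hx]
      calc (∫⁻ ω, (u a ω + ∑ i ∈ s', u i ω) ^ p ∂μ) ^ (1/p)
          ≤ (∫⁻ ω, u a ω ^ p ∂μ) ^ (1/p) + (∫⁻ ω, (∑ i ∈ s', u i ω) ^ p ∂μ) ^ (1/p) :=
            ENNReal.lintegral_Lp_add_le (hu a) (Finset.aemeasurable_fun_sum s' (fun i _ => hu i)) hp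
        _ ≤ _ := add_le_add le_rfl ih

lemma myPhi_tsum_le {p : ℝ} (hp : 1 ≤ p) (u : ℕ → Ω → ℝ≥0∞)
    (hu : ∀ k, AEMeasurable (u k) μ) :
    (∫⁻ ω, (∑' k, u k ω) ^ p ∂μ) ^ (1/p) ≤ ∑' k, (∫⁻ ω, u k ω ^ p ∂μ) ^ (1/p) := by
  have hp0 : (0:ℝ) < p := lt_of_lt_of_le zero_lt_one hp
  have hrpow_mono : Monotone (fun x : ℝ≥0∞ => x ^ p) :=
    fun _ _ hxy => ENNReal.rpow_le_rpow hxy hp0.le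
  have hmono : ∀ ω, Monotone (fun N => (∑ k ∈ Finset.range N, u k ω) ^ p) := by
    intro ω N M hNM
    exact hrpow_mono (Finset.sum_le_sum_of_subset (Finset.range_subset_range.mpr hNM))
  have hms : ∀ N, AEMeasurable (fun ω => (∑ k ∈ Finset.range N, u k ω) ^ p) μ := fun N =>
    (ENNReal.continuous_rpow_const.measurable).comp_aemeasurable
      (Finset.aemeasurable_fun_sum _ (fun i _ => hu i))
  have key : ∀ ω, (∑' k, u k ω) ^ p = ⨆ N, (∑ k ∈ Finset.range N, u k ω) ^ p := by
    intro ω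
    rw [ENNReal.tsum_eq_iSup_nat]
    exact Monotone.map_ciSup_of_continuousAt (ENNReal.continuous_rpow_const.continuousAt)
      hrpow_mono (OrderTop.bddAbove _)
  calc (∫⁻ ω, (∑' k, u k ω) ^ p ∂μ) ^ (1/p)
      = (⨆ N, ∫⁻ ω, (∑ k ∈ Finset.range N, u k ω) ^ p ∂μ) ^ (1/p) := by
        rw [show (fun ω => (∑' k, u k ω) ^ p) = fun ω => ⨆ N, (∑ k ∈ Finset.range N, u k ω) ^ p
            from funext key] at *
        rw [lintegral_iSup' hms (Filter.Eventually.of_forall hmono)]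
    _ = ⨆ N, (∫⁻ ω, (∑ k ∈ Finset.range N, u k ω) ^ p ∂μ) ^ (1/p) := by
        refine Monotone.map_ciSup_of_continuousAt (ENNReal.continuous_rpow_const.continuousAt)
          (fun _ _ hxy => ENNReal.rpow_le_rpow hxy (by positivity)) (OrderTop.bddAbove _)
    _ ≤ ∑' k, (∫⁻ ω, u k ω ^ p ∂μ) ^ (1/p) := by
        refine iSup_le fun N => le_trans (myPhi_sum_le hp _ u hu) ?_
        exact ENNReal.sum_le_tsum _

lemma myConv {p : ℝ} (hp : 1 ≤ p) {Y : Type*} [NormedAddCommGroup Y] {h : Ω → Y}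
    (hh : MemLp h (ENNReal.ofReal p) μ) {B : ℝ} (hB : 0 ≤ B)
    (hle : (∫ ω, ‖h ω‖ ^ p ∂μ) ^ (1/p) ≤ B) :
    ∫⁻ ω, (‖h ω‖₊ : ℝ≥0∞) ^ p ∂μ ≤ ENNReal.ofReal B ^ p := by
  have hp0 : (0:ℝ) < p := lt_of_lt_of_le zero_lt_one hp
  have hq0 : (ENNReal.ofReal p) ≠ 0 := by
    simp [ENNReal.ofReal_eq_zero, not_le, hp0]
  have hqt : (ENNReal.ofReal p) ≠ ∞ := ENNReal.ofReal_ne_top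
  have hint : Integrable (fun ω => ‖h ω‖ ^ p) μ := by
    have := hh.integrable_norm_rpow hq0 hqt
    simpa [ENNReal.toReal_ofReal hp0.le] using this
  have h1 : ∫⁻ ω, (‖h ω‖₊ : ℝ≥0∞) ^ p ∂μ = ENNReal.ofReal (∫ ω, ‖h ω‖ ^ p ∂μ) := by
    rw [MeasureTheory.ofReal_integral_eq_lintegral_ofReal hint
      (Filter.Eventually.of_forall fun ω => Real.rpow_nonneg (norm_nonneg _) p)]
    refine lintegral_congr fun ω => ?_
    rw [← ofReal_norm_eq_coe_nnnorm, ENNReal.ofReal_rpow_of_nonneg (norm_nonneg _) hp0.le]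
  have h2 : ∫ ω, ‖h ω‖ ^ p ∂μ ≤ B ^ p := by
    have hnn : 0 ≤ ∫ ω, ‖h ω‖ ^ p ∂μ :=
      integral_nonneg fun ω => Real.rpow_nonneg (norm_nonneg _) p
    calc ∫ ω, ‖h ω‖ ^ p ∂μ = ((∫ ω, ‖h ω‖ ^ p ∂μ) ^ (1/p)) ^ p := by
          rw [← Real.rpow_mul hnn, one_div_mul_cancel hp0.ne', Real.rpow_one]
      _ ≤ B ^ p := Real.rpow_le_rpow (Real.rpow_nonneg hnn _) hle hp0.le
  rw [h1, ENNReal.ofReal_rpow_of_nonneg hB hp0.le]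
  exact ENNReal.ofReal_le_ofReal h2

lemma myBlock (nk : ℕ → ℕ) (hnk : StrictMono nk) :
    ∀ n, nk 1 < n → ∃ j, nk (j + 1) < n ∧ n ≤ nk (j + 2) := by
  classical
  intro n hn
  set P : ℕ → Prop := fun j => nk j < n with hP
  have hP1 : P 1 := hn
  have h1n : 1 ≤ n := le_trans (Nat.one_le_iff_ne_zero.mpr (by
    intro h0; rw [h0] at hn; omega)) le_rfl
  set m := Nat.findGreatest P n with hm
  have hm1 : 1 ≤ m := Nat.le_findGreatest h1n hP1
  have hPm : P m := Nat.findGreatest_of_ne_zero rfl (by omega)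
  have hnot : ¬ P (m + 1) := by
    by_cases hc : m + 1 ≤ n
    · exact Nat.findGreatest_is_greatest (by omega) hc
    · intro hcon
      exact absurd (lt_of_le_of_lt (hnk.le_apply) hcon) (by omega)
  obtain ⟨j, hj⟩ : ∃ j, m = j + 1 := ⟨m - 1, by omega⟩
  rw [hj] at hPm hnot
  exact ⟨j, hPm, not_lt.mp hnot⟩

end Stmt3Helpers

set_option maxHeartbeats 2000000 in
/-- Theorem 3.2 of the paper. Under the hypotheses of the weighted SLLN,
if moreover `∑ (G_n/W_n)(1 - W_n/W_{n+1}) < ∞`, then `∑ f_k / W_k` converges a.e.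
and in `L_p`-norm, and the maximal function of its partial sums is in `L_p(μ)`. -/
theorem stmt3 {Ω X : Type*} [MeasurableSpace Ω] [NormedAddCommGroup X] [NormedSpace ℝ X]
    [CompleteSpace X]
    (μ : Measure Ω) [IsProbabilityMeasure μ]
    (p : ℝ) (hp : 1 ≤ p)
    -- `(G n)` is a weight
    (G : ℕ → ℝ) (hGmono : Monotone G) (hG1 : 1 ≤ G 1) (hGtop : Tendsto G atTop atTop)
    -- `(W n)` is a weight, weak `p`-admissible w.r.t. `(G n)`
    (W : ℕ → ℝ) (hWmono : Monotone W) (hW1 : 1 ≤ W 1) (hWtop : Tendsto W atTop atTop)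
    (nk : ℕ → ℕ) (hnk : StrictMono nk)
    (ξ : ℕ → ℝ) (hξpos : ∀ k, 0 < ξ k)
    (hadm1 : Summable (fun k => (G (nk k) / W (nk k)) ^ p))
    (hadm2 : Summable (fun k => (ξ k / W (nk k)) ^ p))
    -- `(f n)` is a `(W n)`-sequence in `L_p(μ, X)`
    (f : ℕ → Ω → X) (hf : ∀ n, MemLp (f n) (ENNReal.ofReal p) μ)
    (C : ℝ) (hC : 0 < C)
    (hWseq : ∀ m, (∫ ω, (⨆ n ∈ Set.Ioc (nk m) (nk (m + 1)),
        ‖∑ k ∈ Finset.Icc (nk m + 1) n, f k ω‖) ^ p ∂μ) ^ (1 / p) ≤ C * ξ m)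
    (K : ℝ)
    (hK : ∀ n, (∫ ω, ‖(G n)⁻¹ • ∑ k ∈ Finset.Icc 1 n, f k ω‖ ^ p ∂μ) ^ (1 / p) ≤ K)
    -- the additional condition (3.7)
    (hT21 : Summable (fun n => (G n / W n) * (1 - W n / W (n + 1)))) :
    (∀ᵐ ω ∂μ, ∃ l : X,
        Tendsto (fun n => ∑ k ∈ Finset.Icc 1 n, (W k)⁻¹ • f k ω) atTop (nhds l)) ∧
    (∃ g : Ω → X, MemLp g (ENNReal.ofReal p) μ ∧
        Tendsto (fun n => eLpNorm
          (fun ω => (∑ k ∈ Finset.Icc 1 n, (W k)⁻¹ • f k ω) - g ω)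
          (ENNReal.ofReal p) μ) atTop (nhds 0)) ∧
      MemLp (fun ω => ⨆ n, ‖∑ k ∈ Finset.Icc 1 n, (W k)⁻¹ • f k ω‖)
        (ENNReal.ofReal p) μ := by
  classical
  have hp0 : (0:ℝ) < p := lt_of_lt_of_le zero_lt_one hp
  have hip0 : (0:ℝ) < 1/p := by positivity
  set q : ℝ≥0∞ := ENNReal.ofReal p with hqdef
  have hq0 : q ≠ 0 := by simp [hqdef, ENNReal.ofReal_eq_zero, not_le, hp0]
  have hqt : q ≠ ∞ := ENNReal.ofReal_ne_top
  have hqtr : q.toReal = p := ENNReal.toReal_ofReal hp0.le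
  have hWpos : ∀ n, 1 ≤ n → (0:ℝ) < W n :=
    fun n hn => lt_of_lt_of_le zero_lt_one (le_trans hW1 (hWmono hn))
  have hGpos : ∀ n, 1 ≤ n → (0:ℝ) < G n :=
    fun n hn => lt_of_lt_of_le zero_lt_one (le_trans hG1 (hGmono hn))
  have hK0 : 0 ≤ K := le_trans (Real.rpow_nonneg
    (integral_nonneg fun ω => Real.rpow_nonneg (norm_nonneg _) p) _) (hK 1)
  -- partial sums
  set S : ℕ → Ω → X := fun n ω => ∑ k ∈ Icc 1 n, f k ω with hSdef
  set T : ℕ → Ω → X := fun n ω => ∑ k ∈ Icc 1 n, (W k)⁻¹ • f k ω with hTdef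
  have hS : ∀ n, MemLp (S n) q μ := fun n => memLp_finsetSum _ (fun k _ => hf k)
  have hT : ∀ n, MemLp (T n) q μ :=
    fun n => memLp_finsetSum _ (fun k _ => (hf k).const_smul _)
  set SE : ℕ → Ω → ℝ≥0∞ := fun n ω => (‖S n ω‖₊ : ℝ≥0∞) with hSEdef
  have hSEm : ∀ n, AEMeasurable (SE n) μ := fun n => (hS n).1.enorm
  have hLSfin : ∀ n, ∫⁻ ω, SE n ω ^ p ∂μ ≠ ∞ := by
    intro n hcon
    have h1 := (hS n).2
    rw [eLpNorm_eq_lintegral_rpow_nnnorm hq0 hqt, hqtr] at h1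
    have : (∫⁻ ω, (‖S n ω‖₊ : ℝ≥0∞) ^ p ∂μ) = ∞ := hcon
    rw [this, ENNReal.top_rpow_of_pos hip0] at h1
    exact lt_irrefl _ h1
  have hLS : ∀ n, 1 ≤ n → ∫⁻ ω, SE n ω ^ p ∂μ ≤ ENNReal.ofReal (K * G n) ^ p := by
    intro n hn
    have hGn : (0:ℝ) < G n := hGpos n hn
    have hhm : MemLp (fun ω => (G n)⁻¹ • S n ω) q μ := (hS n).const_smul ((G n)⁻¹)
    have hconv := myConv hp hhm hK0 (hK n)
    have hmeas : AEMeasurable (fun ω => (‖(G n)⁻¹ • S n ω‖₊ : ℝ≥0∞) ^ p) μ :=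
      (ENNReal.continuous_rpow_const.measurable).comp_aemeasurable hhm.1.enorm
    have hkey : ∀ ω, SE n ω = ENNReal.ofReal (G n) * (‖(G n)⁻¹ • S n ω‖₊ : ℝ≥0∞) := by
      intro ω
      rw [← Real.ennnorm_eq_ofReal hGn.le, ← ENNReal.coe_mul, ← nnnorm_smul]
      have : G n • (G n)⁻¹ • S n ω = S n ω := by
        rw [smul_smul, mul_inv_cancel₀ hGn.ne', one_smul]
      rw [this]
    calc ∫⁻ ω, SE n ω ^ p ∂μ
        = ∫⁻ ω, (ENNReal.ofReal (G n))^p * (‖(G n)⁻¹ • S n ω‖₊ : ℝ≥0∞)^p ∂μ := by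
          refine lintegral_congr fun ω => ?_
          rw [hkey ω, ENNReal.mul_rpow_of_nonneg _ _ hp0.le]
      _ = (ENNReal.ofReal (G n))^p * ∫⁻ ω, (‖(G n)⁻¹ • S n ω‖₊ : ℝ≥0∞)^p ∂μ :=
          lintegral_const_mul'' _ hmeas
      _ ≤ (ENNReal.ofReal (G n))^p * ENNReal.ofReal K ^ p := mul_le_mul_right hconv _
      _ = ENNReal.ofReal (K * G n) ^ p := by
          rw [← ENNReal.mul_rpow_of_nonneg _ _ hp0.le, ← ENNReal.ofReal_mul hGn.le,
            mul_comm (G n) K]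
  -- block suprema
  set Bl : ℕ → Ω → ℝ := fun m ω => ⨆ n ∈ Set.Ioc (nk m) (nk (m+1)),
    ‖∑ k ∈ Icc (nk m + 1) n, f k ω‖ with hBldef
  set dom : ℕ → Ω → ℝ := fun m ω => ∑ k ∈ Icc (nk m + 1) (nk (m+1)), ‖f k ω‖ with hdomdef
  have hdomMem : ∀ m, MemLp (dom m) q μ := fun m => memLp_finsetSum _ (fun k _ => (hf k).norm)
  have hdom_nonneg : ∀ m ω, 0 ≤ dom m ω := fun m ω => Finset.sum_nonneg fun k _ => norm_nonneg _
  have hA_le_dom : ∀ m ω n, n ∈ Set.Ioc (nk m) (nk (m+1)) →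
      ‖∑ k ∈ Icc (nk m + 1) n, f k ω‖ ≤ dom m ω := by
    intro m ω n hmem
    calc ‖∑ k ∈ Icc (nk m + 1) n, f k ω‖ ≤ ∑ k ∈ Icc (nk m + 1) n, ‖f k ω‖ := norm_sum_le _ _
      _ ≤ dom m ω := Finset.sum_le_sum_of_subset_of_nonneg
          (Finset.Icc_subset_Icc_right hmem.2) (fun k _ _ => norm_nonneg _)
  have hA_nonneg : ∀ m ω n, 0 ≤ ⨆ (_ : n ∈ Set.Ioc (nk m) (nk (m+1))),
      ‖∑ k ∈ Icc (nk m + 1) n, f k ω‖ := by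
    intro m ω n
    by_cases hmem : n ∈ Set.Ioc (nk m) (nk (m+1))
    · rw [ciSup_pos hmem]; exact norm_nonneg _
    · rw [myPropSup_neg hmem]
  have hA_le : ∀ m ω n, (⨆ (_ : n ∈ Set.Ioc (nk m) (nk (m+1))),
      ‖∑ k ∈ Icc (nk m + 1) n, f k ω‖) ≤ dom m ω := by
    intro m ω n
    by_cases hmem : n ∈ Set.Ioc (nk m) (nk (m+1))
    · rw [ciSup_pos hmem]; exact hA_le_dom m ω n hmem
    · rw [myPropSup_neg hmem]; exact hdom_nonneg m ω
  have hBl_nonneg : ∀ m ω, 0 ≤ Bl m ω := fun m ω => Real.iSup_nonneg (hA_nonneg m ω)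
  have hBl_le_dom : ∀ m ω, Bl m ω ≤ dom m ω := fun m ω => ciSup_le (hA_le m ω)
  have hBl_ge : ∀ m ω n, n ∈ Set.Ioc (nk m) (nk (m+1)) →
      ‖∑ k ∈ Icc (nk m + 1) n, f k ω‖ ≤ Bl m ω := by
    intro m ω n hmem
    have hbdd : BddAbove (Set.range fun n => ⨆ (_ : n ∈ Set.Ioc (nk m) (nk (m+1))),
        ‖∑ k ∈ Icc (nk m + 1) n, f k ω‖) := by
      refine ⟨dom m ω, ?_⟩
      rintro x ⟨n', rfl⟩
      exact hA_le m ω n'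
    have h1 := le_ciSup hbdd n
    rwa [ciSup_pos hmem] at h1
  have hSsumM : ∀ m n, AEStronglyMeasurable (fun ω => ∑ k ∈ Icc (nk m + 1) n, f k ω) μ :=
    fun m n => (memLp_finsetSum _ (fun k _ => hf k) : MemLp _ q μ).1
  have hAm : ∀ m n, AEMeasurable (fun ω => ENNReal.ofReal
      (⨆ (_ : n ∈ Set.Ioc (nk m) (nk (m+1))), ‖∑ k ∈ Icc (nk m + 1) n, f k ω‖)) μ := by
    intro m n
    by_cases hmem : n ∈ Set.Ioc (nk m) (nk (m+1))
    · simp only [ciSup_pos hmem]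
      exact ENNReal.measurable_ofReal.comp_aemeasurable (hSsumM m n).norm.aemeasurable
    · simp only [myPropSup_neg hmem]
      exact aemeasurable_const
  have hBlm : ∀ m, AEMeasurable (Bl m) μ := by
    intro m
    have heq : Bl m = fun ω => (⨆ n, ENNReal.ofReal (⨆ (_ : n ∈ Set.Ioc (nk m) (nk (m+1))),
        ‖∑ k ∈ Icc (nk m + 1) n, f k ω‖)).toReal := by
      funext ω
      exact myReal_iSup_eq_toReal _ (hA_nonneg m ω)
    rw [heq]
    exact ENNReal.measurable_toReal.comp_aemeasurable (AEMeasurable.iSup (fun n => hAm m n))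
  have hBlMem : ∀ m, MemLp (Bl m) q μ := by
    intro m
    refine MemLp.of_le (hdomMem m) ((aestronglyMeasurable_iff_aemeasurable).mpr (hBlm m)) ?_
    refine Filter.Eventually.of_forall fun ω => ?_
    rw [Real.norm_eq_abs, Real.norm_eq_abs, abs_of_nonneg (hBl_nonneg m ω),
      abs_of_nonneg (hdom_nonneg m ω)]
    exact hBl_le_dom m ω
  have hLB : ∀ m, ∫⁻ ω, (ENNReal.ofReal (Bl m ω)) ^ p ∂μ ≤ ENNReal.ofReal (C * ξ m) ^ p := by
    intro m
    have hCξ : 0 ≤ C * ξ m := mul_nonneg hC.le (hξpos m).le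
    have hle : (∫ ω, ‖Bl m ω‖ ^ p ∂μ) ^ (1/p) ≤ C * ξ m := by
      have h0 := hWseq m
      rw [show (1:ℝ)/p = 1/p from rfl] at h0
      refine le_trans (le_of_eq ?_) h0
      congr 1
      refine integral_congr_ae (Filter.Eventually.of_forall fun ω => ?_)
      show ‖Bl m ω‖ ^ p = (⨆ n ∈ Set.Ioc (nk m) (nk (m+1)),
        ‖∑ k ∈ Icc (nk m + 1) n, f k ω‖) ^ p
      rw [Real.norm_eq_abs, abs_of_nonneg (hBl_nonneg m ω)]
    have hconv := myConv hp (hBlMem m) hCξ hle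
    refine le_trans (le_of_eq ?_) hconv
    refine lintegral_congr fun ω => ?_
    rw [Real.ennnorm_eq_ofReal (hBl_nonneg m ω)]
  -- Abel summation pieces
  set u : ℕ → Ω → X := fun k ω => ((W (k+1))⁻¹ - (W (k+2))⁻¹) • S (k+1) ω with hudef
  have hAbel : ∀ n ω, T n ω = (W n)⁻¹ • S n ω + ∑ k ∈ range (n-1), u k ω := by
    intro n ω
    induction n with
    | zero => simp [hTdef, hSdef]
    | succ n ih =>
      cases n with
      | zero => simp [hTdef, hSdef]
      | succ m =>
        have hTrec : T (m+2) ω = T (m+1) ω + (W (m+2))⁻¹ • f (m+2) ω := by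
          simp only [hTdef]
          rw [Finset.sum_Icc_succ_top (by omega : 1 ≤ m+1+1)]
        have hSrec : S (m+2) ω = S (m+1) ω + f (m+2) ω := by
          simp only [hSdef]
          rw [Finset.sum_Icc_succ_top (by omega : 1 ≤ m+1+1)]
        simp only [Nat.add_sub_cancel] at ih ⊢
        rw [hTrec, ih, hSrec, Finset.sum_range_succ]
        simp only [hudef, smul_add, sub_smul]
        abel
  have hWinv : ∀ k, ((W (k+2))⁻¹ : ℝ) ≤ (W (k+1))⁻¹ := fun k =>
    inv_anti₀ (hWpos (k+1) (by omega)) (hWmono (by omega : k+1 ≤ k+2))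
  have hD : ∀ k, 0 ≤ (W (k+1))⁻¹ - (W (k+2))⁻¹ := fun k => sub_nonneg.mpr (hWinv k)
  have hu_norm : ∀ k ω, (‖u k ω‖₊ : ℝ≥0∞)
      = ENNReal.ofReal ((W (k+1))⁻¹ - (W (k+2))⁻¹) * SE (k+1) ω := by
    intro k ω
    simp only [hudef, hSEdef]
    rw [nnnorm_smul, ENNReal.coe_mul, Real.ennnorm_eq_ofReal (hD k)]
  set UE : Ω → ℝ≥0∞ := fun ω => ∑' k, (‖u k ω‖₊ : ℝ≥0∞) with hUEdef
  have hum : ∀ k, AEMeasurable (fun ω => (‖u k ω‖₊ : ℝ≥0∞)) μ := by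
    intro k
    have : MemLp (u k) q μ := by
      rw [hudef]
      exact (hS (k+1)).const_smul _
    exact this.1.enorm
  have hUEm : AEMeasurable UE μ := by
    rw [hUEdef]; exact AEMeasurable.ennreal_tsum hum
  -- summability facts
  have ht_eq : ∀ k, ((W (k+1))⁻¹ - (W (k+2))⁻¹) * G (k+1)
      = (G (k+1) / W (k+1)) * (1 - W (k+1) / W (k+2)) := by
    intro k
    have h1 : W (k+1) ≠ 0 := (hWpos (k+1) (by omega)).ne'
    have h2 : W (k+2) ≠ 0 := (hWpos (k+2) (by omega)).ne'
    field_simp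
  have hshift : ∀ (a : ℕ → ℝ≥0∞), ∑' k, a (k+1) ≤ ∑' n, a n := by
    intro a
    exact ENNReal.tsum_comp_le_tsum_of_injective (add_left_injective 1) a
  have hofReal_tsum : ∀ (b : ℕ → ℝ), Summable b → ∑' k, ENNReal.ofReal (b k) ≠ ∞ := by
    intro b hb
    have habs : Summable fun n => |b n| := hb.abs
    have h1 : ∑' k, ENNReal.ofReal (b k) ≤ ∑' k, ENNReal.ofReal |b k| :=
      ENNReal.tsum_le_tsum fun k => ENNReal.ofReal_le_ofReal (le_abs_self _)
    have h3 : ∑' n, ENNReal.ofReal |b n| = ENNReal.ofReal (∑' n, |b n|) :=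
      (ENNReal.ofReal_tsum_of_nonneg (fun n => abs_nonneg _) habs).symm
    refine ne_top_of_le_ne_top ?_ h1
    rw [h3]
    exact ENNReal.ofReal_ne_top
  have htsum : ∑' k, ENNReal.ofReal (((W (k+1))⁻¹ - (W (k+2))⁻¹) * G (k+1)) ≠ ∞ := by
    have := hofReal_tsum (fun k => (G (k+1) / W (k+1)) * (1 - W (k+1) / W (k+1+1)))
      ((summable_nat_add_iff 1).mpr hT21)
    refine ne_top_of_le_ne_top this (ENNReal.tsum_le_tsum fun k => ?_)
    rw [ht_eq k]
  have hrpow_inv : ∀ x : ℝ≥0∞, (x^p)^(1/p) = x := by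
    intro x
    rw [← ENNReal.rpow_mul, mul_one_div_cancel hp0.ne', ENNReal.rpow_one]
  have hrpow_inv' : ∀ x : ℝ≥0∞, (x^(1/p))^p = x := by
    intro x
    rw [← ENNReal.rpow_mul, one_div_mul_cancel hp0.ne', ENNReal.rpow_one]
  have hnkpos : ∀ j : ℕ, 1 ≤ nk (j+1) := fun j => le_trans (by omega) hnk.le_apply
  -- main dominating functions
  set Zt : ℕ → Ω → ℝ≥0∞ := fun j ω => (ENNReal.ofReal ((W (nk (j+1)))⁻¹)
    * (SE (nk (j+1)) ω + ENNReal.ofReal (Bl (j+1) ω))) ^ p with hZtdef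
  set Z : Ω → ℝ≥0∞ := fun ω => ∑' j, Zt j ω with hZdef
  set FS : Ω → ℝ≥0∞ := fun ω => ∑ j ∈ range (nk 1 + 1), ENNReal.ofReal ((W j)⁻¹) * SE j ω
    with hFSdef
  set Dt : Ω → ℝ≥0∞ := fun ω => FS ω + Z ω ^ (1/p) + UE ω with hDtdef
  have hBlEm : ∀ m, AEMeasurable (fun ω => ENNReal.ofReal (Bl m ω)) μ :=
    fun m => ENNReal.measurable_ofReal.comp_aemeasurable (hBlm m)
  have hZtm : ∀ j, AEMeasurable (Zt j) μ := by
    intro j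
    rw [hZtdef]
    exact (ENNReal.continuous_rpow_const.measurable).comp_aemeasurable
      ((aemeasurable_const.mul ((hSEm _).add (hBlEm _))))
  have hZm : AEMeasurable Z μ := by
    rw [hZdef]; exact AEMeasurable.ennreal_tsum hZtm
  have hFSm : AEMeasurable FS μ := by
    rw [hFSdef]
    exact Finset.aemeasurable_fun_sum _ fun j _ => aemeasurable_const.mul (hSEm j)
  have hDtm : AEMeasurable Dt μ := by
    rw [hDtdef]
    exact ((hFSm.add ((ENNReal.continuous_rpow_const.measurable).comp_aemeasurable hZm)).add hUEm)
  -- per-block L^p estimate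
  have hLS' : ∀ n, 1 ≤ n → (∫⁻ ω, SE n ω ^ p ∂μ) ^ (1/p) ≤ ENNReal.ofReal (K * G n) := by
    intro n hn
    calc (∫⁻ ω, SE n ω ^ p ∂μ) ^ (1/p)
        ≤ (ENNReal.ofReal (K * G n) ^ p) ^ (1/p) := ENNReal.rpow_le_rpow (hLS n hn) hip0.le
      _ = ENNReal.ofReal (K * G n) := hrpow_inv _
  have hLB' : ∀ m, (∫⁻ ω, (ENNReal.ofReal (Bl m ω)) ^ p ∂μ) ^ (1/p)
      ≤ ENNReal.ofReal (C * ξ m) := by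
    intro m
    calc (∫⁻ ω, (ENNReal.ofReal (Bl m ω)) ^ p ∂μ) ^ (1/p)
        ≤ (ENNReal.ofReal (C * ξ m) ^ p) ^ (1/p) := ENNReal.rpow_le_rpow (hLB m) hip0.le
      _ = ENNReal.ofReal (C * ξ m) := hrpow_inv _
  have hIZt : ∀ j, ∫⁻ ω, Zt j ω ∂μ ≤ (ENNReal.ofReal ((W (nk (j+1)))⁻¹)
      * (ENNReal.ofReal (K * G (nk (j+1))) + ENNReal.ofReal (C * ξ (j+1)))) ^ p := by
    intro j
    have hWinv0 : (0:ℝ) ≤ (W (nk (j+1)))⁻¹ := (inv_nonneg).mpr (hWpos _ (hnkpos j)).le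
    have hmeas : AEMeasurable (fun ω => (SE (nk (j+1)) ω + ENNReal.ofReal (Bl (j+1) ω)) ^ p) μ :=
      (ENNReal.continuous_rpow_const.measurable).comp_aemeasurable ((hSEm _).add (hBlEm _))
    have h1 : ∫⁻ ω, Zt j ω ∂μ = ENNReal.ofReal ((W (nk (j+1)))⁻¹) ^ p
        * ∫⁻ ω, (SE (nk (j+1)) ω + ENNReal.ofReal (Bl (j+1) ω)) ^ p ∂μ := by
      rw [← lintegral_const_mul'' _ hmeas]
      refine lintegral_congr fun ω => ?_
      rw [hZtdef]
      exact ENNReal.mul_rpow_of_nonneg _ _ hp0.le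
    have h2 : (∫⁻ ω, (SE (nk (j+1)) ω + ENNReal.ofReal (Bl (j+1) ω)) ^ p ∂μ) ^ (1/p)
        ≤ ENNReal.ofReal (K * G (nk (j+1))) + ENNReal.ofReal (C * ξ (j+1)) := by
      refine le_trans (ENNReal.lintegral_Lp_add_le (hSEm _) (hBlEm _) hp) ?_
      exact add_le_add (hLS' _ (hnkpos j)) (hLB' _)
    have h3 : ∫⁻ ω, (SE (nk (j+1)) ω + ENNReal.ofReal (Bl (j+1) ω)) ^ p ∂μ
        ≤ (ENNReal.ofReal (K * G (nk (j+1))) + ENNReal.ofReal (C * ξ (j+1))) ^ p := by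
      have := ENNReal.rpow_le_rpow h2 hp0.le
      rwa [hrpow_inv'] at this
    rw [h1, ENNReal.mul_rpow_of_nonneg _ _ hp0.le]
    exact mul_le_mul_right h3 _
  -- summability of the block series
  have hIZ : ∫⁻ ω, Z ω ∂μ ≠ ∞ := by
    have hZeq : ∫⁻ ω, Z ω ∂μ = ∑' j, ∫⁻ ω, Zt j ω ∂μ := by
      rw [hZdef]
      exact lintegral_tsum hZtm
    have hsum1 : Summable (fun j => K^p * (G (nk (j+1)) / W (nk (j+1)))^p) :=
      ((summable_nat_add_iff 1).mpr hadm1).mul_left _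
    have hsum2 : Summable (fun j => C^p * (ξ (j+1) / W (nk (j+1)))^p) :=
      ((summable_nat_add_iff 1).mpr hadm2).mul_left _
    have hbound : ∀ j, ∫⁻ ω, Zt j ω ∂μ
        ≤ 2^p * (ENNReal.ofReal (K^p * (G (nk (j+1)) / W (nk (j+1)))^p)
          + ENNReal.ofReal (C^p * (ξ (j+1) / W (nk (j+1)))^p)) := by
      intro j
      have hWj : (0:ℝ) < W (nk (j+1)) := hWpos _ (hnkpos j)
      have hWinv0 : (0:ℝ) ≤ (W (nk (j+1)))⁻¹ := (inv_nonneg).mpr hWj.le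
      have hKG : (0:ℝ) ≤ K * G (nk (j+1)) := mul_nonneg hK0 (hGpos _ (hnkpos j)).le
      have hCξ : (0:ℝ) ≤ C * ξ (j+1) := mul_nonneg hC.le (hξpos _).le
      refine le_trans (hIZt j) ?_
      have e1 : ENNReal.ofReal ((W (nk (j+1)))⁻¹)
          * (ENNReal.ofReal (K * G (nk (j+1))) + ENNReal.ofReal (C * ξ (j+1)))
          = ENNReal.ofReal ((W (nk (j+1)))⁻¹ * (K * G (nk (j+1))))
            + ENNReal.ofReal ((W (nk (j+1)))⁻¹ * (C * ξ (j+1))) := by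
        rw [mul_add, ← ENNReal.ofReal_mul hWinv0, ← ENNReal.ofReal_mul hWinv0]
      rw [e1]
      refine le_trans (myAddRpow _ _ hp0.le) ?_
      refine mul_le_mul_right (add_le_add (le_of_eq ?_) (le_of_eq ?_)) _
      · rw [ENNReal.ofReal_rpow_of_nonneg (mul_nonneg hWinv0 hKG) hp0.le,
          show (W (nk (j+1)))⁻¹ * (K * G (nk (j+1))) = K * (G (nk (j+1)) / W (nk (j+1))) by
            field_simp,
          Real.mul_rpow hK0 (div_nonneg (hGpos _ (hnkpos j)).le hWj.le)]
      · rw [ENNReal.ofReal_rpow_of_nonneg (mul_nonneg hWinv0 hCξ) hp0.le,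
          show (W (nk (j+1)))⁻¹ * (C * ξ (j+1)) = C * (ξ (j+1) / W (nk (j+1))) by field_simp,
          Real.mul_rpow hC.le (div_nonneg (hξpos _).le hWj.le)]
    rw [hZeq]
    refine ne_top_of_le_ne_top ?_ (ENNReal.tsum_le_tsum hbound)
    rw [ENNReal.tsum_mul_left, ENNReal.tsum_add]
    have f1 : ∑' j, ENNReal.ofReal (K^p * (G (nk (j+1)) / W (nk (j+1)))^p) ≠ ∞ :=
      hofReal_tsum _ hsum1
    have f2 : ∑' j, ENNReal.ofReal (C^p * (ξ (j+1) / W (nk (j+1)))^p) ≠ ∞ :=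
      hofReal_tsum _ hsum2
    refine ENNReal.mul_ne_top ?_ (by
      simp only [ne_eq, ENNReal.add_eq_top, not_or]
      exact ⟨f1, f2⟩)
    exact (ENNReal.rpow_lt_top_of_nonneg hp0.le (by norm_num)).ne
  -- bound for the Abel series part
  have hPhiU : (∫⁻ ω, UE ω ^ p ∂μ) ^ (1/p) ≠ ∞ := by
    have h1 : (∫⁻ ω, UE ω ^ p ∂μ) ^ (1/p)
        ≤ ∑' k, (∫⁻ ω, (‖u k ω‖₊ : ℝ≥0∞) ^ p ∂μ) ^ (1/p) := myPhi_tsum_le hp _ hum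
    have h2 : ∀ k, (∫⁻ ω, (‖u k ω‖₊ : ℝ≥0∞) ^ p ∂μ) ^ (1/p)
        ≤ ENNReal.ofReal (((W (k+1))⁻¹ - (W (k+2))⁻¹) * (K * G (k+1))) := by
      intro k
      have hmeas : AEMeasurable (fun ω => SE (k+1) ω ^ p) μ :=
        (ENNReal.continuous_rpow_const.measurable).comp_aemeasurable (hSEm _)
      have e1 : ∫⁻ ω, (‖u k ω‖₊ : ℝ≥0∞) ^ p ∂μ
          = ENNReal.ofReal ((W (k+1))⁻¹ - (W (k+2))⁻¹) ^ p * ∫⁻ ω, SE (k+1) ω ^ p ∂μ := by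
        rw [← lintegral_const_mul'' _ hmeas]
        refine lintegral_congr fun ω => ?_
        rw [hu_norm k ω, ENNReal.mul_rpow_of_nonneg _ _ hp0.le]
      rw [e1]
      calc (ENNReal.ofReal ((W (k+1))⁻¹ - (W (k+2))⁻¹) ^ p * ∫⁻ ω, SE (k+1) ω ^ p ∂μ) ^ (1/p)
          = ENNReal.ofReal ((W (k+1))⁻¹ - (W (k+2))⁻¹)
            * (∫⁻ ω, SE (k+1) ω ^ p ∂μ) ^ (1/p) := by
            rw [ENNReal.mul_rpow_of_nonneg _ _ hip0.le, hrpow_inv]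
        _ ≤ ENNReal.ofReal ((W (k+1))⁻¹ - (W (k+2))⁻¹) * ENNReal.ofReal (K * G (k+1)) :=
            mul_le_mul_right (hLS' _ (by omega)) _
        _ = ENNReal.ofReal (((W (k+1))⁻¹ - (W (k+2))⁻¹) * (K * G (k+1))) :=
            (ENNReal.ofReal_mul (hD k)).symm
    have h3 : ∑' k, ENNReal.ofReal (((W (k+1))⁻¹ - (W (k+2))⁻¹) * (K * G (k+1))) ≠ ∞ := by
      have heq : ∀ k, (((W (k+1))⁻¹ - (W (k+2))⁻¹) * (K * G (k+1)))
          = K * (((W (k+1))⁻¹ - (W (k+2))⁻¹) * G (k+1)) := fun k => by ring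
      simp only [heq]
      have : ∀ k, ENNReal.ofReal (K * (((W (k+1))⁻¹ - (W (k+2))⁻¹) * G (k+1)))
          = ENNReal.ofReal K * ENNReal.ofReal (((W (k+1))⁻¹ - (W (k+2))⁻¹) * G (k+1)) :=
        fun k => ENNReal.ofReal_mul hK0
      simp only [this]
      rw [ENNReal.tsum_mul_left]
      exact ENNReal.mul_ne_top ENNReal.ofReal_ne_top htsum
    exact ne_top_of_le_ne_top (ne_top_of_le_ne_top h3 (ENNReal.tsum_le_tsum h2)) h1
  -- bound for the finitely many initial terms
  have hPhiFS : (∫⁻ ω, FS ω ^ p ∂μ) ^ (1/p) ≠ ∞ := by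
    have h1 : (∫⁻ ω, FS ω ^ p ∂μ) ^ (1/p) ≤ ∑ j ∈ range (nk 1 + 1),
        (∫⁻ ω, (ENNReal.ofReal ((W j)⁻¹) * SE j ω) ^ p ∂μ) ^ (1/p) := by
      rw [hFSdef]
      exact myPhi_sum_le hp _ _ (fun j => aemeasurable_const.mul (hSEm j))
    refine ne_top_of_le_ne_top ?_ h1
    refine (ENNReal.sum_lt_top.mpr fun j _ => ?_).ne
    have hmeas : AEMeasurable (fun ω => SE j ω ^ p) μ :=
      (ENNReal.continuous_rpow_const.measurable).comp_aemeasurable (hSEm _)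
    have e1 : ∫⁻ ω, (ENNReal.ofReal ((W j)⁻¹) * SE j ω) ^ p ∂μ
        = ENNReal.ofReal ((W j)⁻¹) ^ p * ∫⁻ ω, SE j ω ^ p ∂μ := by
      rw [← lintegral_const_mul'' _ hmeas]
      refine lintegral_congr fun ω => ?_
      rw [ENNReal.mul_rpow_of_nonneg _ _ hp0.le]
    rw [e1, ENNReal.mul_rpow_of_nonneg _ _ hip0.le, hrpow_inv]
    refine ENNReal.mul_lt_top ENNReal.ofReal_lt_top ?_
    exact (ENNReal.rpow_lt_top_of_nonneg hip0.le (hLSfin j))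
  -- total dominator
  have hIDt : ∫⁻ ω, Dt ω ^ p ∂μ ≠ ∞ := by
    have hZrm : AEMeasurable (fun ω => Z ω ^ (1/p)) μ :=
      (ENNReal.continuous_rpow_const.measurable).comp_aemeasurable hZm
    have h1 : (∫⁻ ω, Dt ω ^ p ∂μ) ^ (1/p)
        ≤ (∫⁻ ω, (FS ω + Z ω ^ (1/p)) ^ p ∂μ) ^ (1/p) + (∫⁻ ω, UE ω ^ p ∂μ) ^ (1/p) := by
      rw [hDtdef]
      exact ENNReal.lintegral_Lp_add_le (hFSm.add hZrm) hUEm hp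
    have h2 : (∫⁻ ω, (FS ω + Z ω ^ (1/p)) ^ p ∂μ) ^ (1/p)
        ≤ (∫⁻ ω, FS ω ^ p ∂μ) ^ (1/p) + (∫⁻ ω, (Z ω ^ (1/p)) ^ p ∂μ) ^ (1/p) :=
      ENNReal.lintegral_Lp_add_le hFSm hZrm hp
    have h3 : (∫⁻ ω, (Z ω ^ (1/p)) ^ p ∂μ) ^ (1/p) ≠ ∞ := by
      have : ∀ ω, (Z ω ^ (1/p)) ^ p = Z ω := fun ω => hrpow_inv' _
      simp only [this]
      exact (ENNReal.rpow_lt_top_of_nonneg hip0.le hIZ).ne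
    have h4 : (∫⁻ ω, Dt ω ^ p ∂μ) ^ (1/p) ≠ ∞ := by
      refine ne_top_of_le_ne_top ?_ (le_trans h1 (add_le_add h2 le_rfl))
      simp only [ne_eq, ENNReal.add_eq_top, not_or]
      exact ⟨⟨hPhiFS, h3⟩, hPhiU⟩
    intro hcon
    rw [hcon, ENNReal.top_rpow_of_pos hip0] at h4
    exact h4 rfl
  -- pointwise bounds
  have hIcc : ∀ x : ℕ, Icc 1 x = Ioc 0 x := fun x => by rw [← Finset.Icc_add_one_left_eq_Ioc]; rfl
  have hSsplit : ∀ m n ω, nk m < n →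
      S n ω = S (nk m) ω + ∑ k ∈ Icc (nk m + 1) n, f k ω := by
    intro m n ω h
    simp only [hSdef]
    rw [hIcc n, hIcc (nk m), show Icc (nk m + 1) n = Ioc (nk m) n from by
      rw [← Finset.Icc_add_one_left_eq_Ioc]]
    exact (Finset.sum_Ioc_consecutive _ (Nat.zero_le _) h.le).symm
  have hSEblock : ∀ m n ω, n ∈ Set.Ioc (nk m) (nk (m+1)) →
      SE n ω ≤ SE (nk m) ω + ENNReal.ofReal (Bl m ω) := by
    intro m n ω hmem
    have h1 : SE n ω ≤ SE (nk m) ω + (‖∑ k ∈ Icc (nk m + 1) n, f k ω‖₊ : ℝ≥0∞) := by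
      rw [hSEdef]
      simp only
      rw [hSsplit m n ω hmem.1]
      exact_mod_cast nnnorm_add_le _ _
    refine le_trans h1 (add_le_add le_rfl ?_)
    rw [← ofReal_norm_eq_coe_nnnorm]
    exact ENNReal.ofReal_le_ofReal (hBl_ge m ω n hmem)
  have haseq : ∀ n ω, ENNReal.ofReal ((W n)⁻¹) * SE n ω ≤ FS ω + Z ω ^ (1/p) := by
    intro n ω
    by_cases hn : n ≤ nk 1
    · refine le_trans ?_ le_self_add
      rw [hFSdef]
      refine Finset.single_le_sum (f := fun j => ENNReal.ofReal ((W j)⁻¹) * SE j ω)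
        (fun j _ => zero_le) ?_
      exact Finset.mem_range.mpr (by omega)
    · obtain ⟨j, hj1, hj2⟩ := myBlock nk hnk n (by omega)
      have hciW : ENNReal.ofReal ((W n)⁻¹) ≤ ENNReal.ofReal ((W (nk (j+1)))⁻¹) :=
        ENNReal.ofReal_le_ofReal
          (inv_anti₀ (hWpos _ (hnkpos j)) (hWmono hj1.le))
      have hSEle : SE n ω ≤ SE (nk (j+1)) ω + ENNReal.ofReal (Bl (j+1) ω) :=
        hSEblock (j+1) n ω ⟨hj1, hj2⟩
      calc ENNReal.ofReal ((W n)⁻¹) * SE n ω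
          ≤ ENNReal.ofReal ((W (nk (j+1)))⁻¹)
            * (SE (nk (j+1)) ω + ENNReal.ofReal (Bl (j+1) ω)) := mul_le_mul' hciW hSEle
        _ = (Zt j ω) ^ (1/p) := by rw [hZtdef]; exact (hrpow_inv _).symm
        _ ≤ Z ω ^ (1/p) := by
            refine ENNReal.rpow_le_rpow ?_ hip0.le
            rw [hZdef]
            exact ENNReal.le_tsum j
        _ ≤ FS ω + Z ω ^ (1/p) := le_add_self
  have hTn_le : ∀ n ω, (‖T n ω‖₊ : ℝ≥0∞) ≤ Dt ω := by
    intro n ω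
    rcases Nat.eq_zero_or_pos n with rfl | hn
    · have : T 0 ω = 0 := by simp [hTdef]
      rw [this]
      simp
    · rw [hAbel n ω]
      have hW0 : (0:ℝ) ≤ (W n)⁻¹ := inv_nonneg.mpr (hWpos n hn).le
      calc (‖(W n)⁻¹ • S n ω + ∑ k ∈ range (n-1), u k ω‖₊ : ℝ≥0∞)
          ≤ (‖(W n)⁻¹ • S n ω‖₊ : ℝ≥0∞) + (‖∑ k ∈ range (n-1), u k ω‖₊ : ℝ≥0∞) := by
            exact_mod_cast nnnorm_add_le _ _
        _ ≤ ENNReal.ofReal ((W n)⁻¹) * SE n ω + ∑ k ∈ range (n-1), (‖u k ω‖₊ : ℝ≥0∞) := by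
            refine add_le_add (le_of_eq ?_) ?_
            · rw [nnnorm_smul, ENNReal.coe_mul, Real.ennnorm_eq_ofReal hW0]
            · exact_mod_cast nnnorm_sum_le _ _
        _ ≤ (FS ω + Z ω ^ (1/p)) + UE ω := by
            refine add_le_add (haseq n ω) ?_
            rw [hUEdef]
            exact ENNReal.sum_le_tsum _
        _ = Dt ω := by rw [hDtdef]
  -- block pointwise bound (used twice)
  have hblockbound : ∀ n ω j, nk (j+1) < n → n ≤ nk (j+2) →
      ENNReal.ofReal ((W n)⁻¹) * SE n ω ≤ (Zt j ω) ^ (1/p) := by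
    intro n ω j hj1 hj2
    have hciW : ENNReal.ofReal ((W n)⁻¹) ≤ ENNReal.ofReal ((W (nk (j+1)))⁻¹) :=
      ENNReal.ofReal_le_ofReal (inv_anti₀ (hWpos _ (hnkpos j)) (hWmono hj1.le))
    have hSEle : SE n ω ≤ SE (nk (j+1)) ω + ENNReal.ofReal (Bl (j+1) ω) :=
      hSEblock (j+1) n ω ⟨hj1, hj2⟩
    calc ENNReal.ofReal ((W n)⁻¹) * SE n ω
        ≤ ENNReal.ofReal ((W (nk (j+1)))⁻¹)
          * (SE (nk (j+1)) ω + ENNReal.ofReal (Bl (j+1) ω)) := mul_le_mul' hciW hSEle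
      _ = (Zt j ω) ^ (1/p) := by rw [hZtdef]; exact (hrpow_inv _).symm
  -- a.e. finiteness
  have haeZ : ∀ᵐ ω ∂μ, Z ω ≠ ∞ := by
    filter_upwards [ae_lt_top' hZm hIZ] with ω h using h.ne
  have hIU : ∫⁻ ω, UE ω ^ p ∂μ ≠ ∞ := by
    intro hcon
    rw [hcon, ENNReal.top_rpow_of_pos hip0] at hPhiU
    exact hPhiU rfl
  have haeU : ∀ᵐ ω ∂μ, UE ω ≠ ∞ := by
    have hm : AEMeasurable (fun ω => UE ω ^ p) μ :=
      (ENNReal.continuous_rpow_const.measurable).comp_aemeasurable hUEm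
    filter_upwards [ae_lt_top' hm hIU] with ω h
    intro hcon
    rw [hcon, ENNReal.top_rpow_of_pos hp0] at h
    exact absurd h (lt_irrefl _)
  have haeDt : ∀ᵐ ω ∂μ, Dt ω ≠ ∞ := by
    have hm : AEMeasurable (fun ω => Dt ω ^ p) μ :=
      (ENNReal.continuous_rpow_const.measurable).comp_aemeasurable hDtm
    filter_upwards [ae_lt_top' hm hIDt] with ω h
    intro hcon
    rw [hcon, ENNReal.top_rpow_of_pos hp0] at h
    exact absurd h (lt_irrefl _)
  -- a.e. convergence of the weighted partial sums to 0
  have hS0 : ∀ ω, Z ω ≠ ∞ → Tendsto (fun n => (W n)⁻¹ • S n ω) atTop (𝓝 0) := by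
    intro ω hZω
    have hZω' : ∑' j, Zt j ω ≠ ∞ := hZω
    have hZt0 : Tendsto (fun j => Zt j ω) atTop (𝓝 0) :=
      ENNReal.tendsto_atTop_zero_of_tsum_ne_top hZω'
    have haseq0 : Tendsto (fun n => ENNReal.ofReal ((W n)⁻¹) * SE n ω) atTop (𝓝 0) := by
      rw [ENNReal.tendsto_atTop_zero]
      intro ε hε
      rcases eq_top_or_lt_top ε with rfl | hεt
      · exact ⟨0, fun n _ => le_top⟩
      have hεp : 0 < ε ^ p := ENNReal.rpow_pos hε hεt.ne
      obtain ⟨N, hN⟩ := (ENNReal.tendsto_atTop_zero.mp hZt0) (ε ^ p) hεp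
      refine ⟨nk (N+1) + 1, fun n hn => ?_⟩
      have hn1 : nk 1 < n :=
        lt_of_le_of_lt (hnk.monotone (by omega : 1 ≤ N+1)) (by omega)
      obtain ⟨j, hj1, hj2⟩ := myBlock nk hnk n hn1
      have hjN : N ≤ j := by
        have h1 : nk (N+1) < nk (j+2) := by
          have : nk (N+1) < n := by omega
          omega
        have := hnk.lt_iff_lt.mp h1
        omega
      calc ENNReal.ofReal ((W n)⁻¹) * SE n ω ≤ (Zt j ω) ^ (1/p) :=
            hblockbound n ω j hj1 hj2
        _ ≤ (ε ^ p) ^ (1/p) := ENNReal.rpow_le_rpow (hN j hjN) hip0.le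
        _ = ε := hrpow_inv _
    rw [tendsto_zero_iff_norm_tendsto_zero]
    have h1 : Tendsto (fun n => (ENNReal.ofReal ((W n)⁻¹) * SE n ω).toReal) atTop (𝓝 0) := by
      have := (ENNReal.tendsto_toReal (by simp : (0:ℝ≥0∞) ≠ ⊤)).comp haseq0
      simpa only [ENNReal.toReal_zero, Function.comp_def] using this
    refine h1.congr' ?_
    filter_upwards [Filter.eventually_ge_atTop 1] with n hn
    have hW0 : (0:ℝ) ≤ (W n)⁻¹ := inv_nonneg.mpr (hWpos n hn).le
    rw [ENNReal.toReal_mul, ENNReal.toReal_ofReal hW0, norm_smul, Real.norm_eq_abs,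
      abs_of_nonneg hW0]
    simp [hSEdef]
  have haeconv : ∀ᵐ ω ∂μ, ∃ l, Tendsto (fun n => T n ω) atTop (𝓝 l) := by
    filter_upwards [haeZ, haeU] with ω hZω hUω
    have hsum : Summable (fun k => u k ω) := by
      refine Summable.of_norm ?_
      have h1 : ∑' k, (‖u k ω‖₊ : ℝ≥0∞) ≠ ∞ := hUω
      have h2 := ENNReal.summable_toReal h1
      simpa using h2
    have hP : Tendsto (fun N => ∑ k ∈ range N, u k ω) atTop (𝓝 (∑' k, u k ω)) :=
      hsum.hasSum.tendsto_sum_nat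
    have hP' : Tendsto (fun n => ∑ k ∈ range (n-1), u k ω) atTop (𝓝 (∑' k, u k ω)) :=
      hP.comp (tendsto_sub_atTop_nat 1)
    refine ⟨∑' k, u k ω, ?_⟩
    have h3 := (hS0 ω hZω).add hP'
    rw [zero_add] at h3
    exact h3.congr fun n => (hAbel n ω).symm
  -- the limit function
  set g : Ω → X := fun ω => if h : ∃ l, Tendsto (fun n => T n ω) atTop (𝓝 l) then h.choose else 0
    with hgdef
  have htendg : ∀ᵐ ω ∂μ, Tendsto (fun n => T n ω) atTop (𝓝 (g ω)) := by
    filter_upwards [haeconv] with ω hω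
    rw [hgdef]
    simp only [dif_pos hω]
    exact hω.choose_spec
  have hgm : AEStronglyMeasurable g μ :=
    aestronglyMeasurable_of_tendsto_ae atTop (fun n => (hT n).1) htendg
  have hgDom : ∀ᵐ ω ∂μ, (‖g ω‖₊ : ℝ≥0∞) ≤ Dt ω := by
    filter_upwards [htendg, haeDt] with ω hω hdt
    have h1 : ∀ n, ‖T n ω‖ ≤ (Dt ω).toReal := by
      intro n
      have h2 := ENNReal.toReal_mono hdt (hTn_le n ω)
      simpa using h2
    have h3 : ‖g ω‖ ≤ (Dt ω).toReal := le_of_tendsto' hω.norm h1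
    calc (‖g ω‖₊ : ℝ≥0∞) = ENNReal.ofReal ‖g ω‖ := (ofReal_norm_eq_coe_nnnorm _).symm
      _ ≤ ENNReal.ofReal (Dt ω).toReal := ENNReal.ofReal_le_ofReal h3
      _ = Dt ω := ENNReal.ofReal_toReal hdt
  have hgmem : MemLp g q μ := by
    refine ⟨hgm, ?_⟩
    rw [eLpNorm_eq_lintegral_rpow_nnnorm hq0 hqt, hqtr]
    refine ENNReal.rpow_lt_top_of_nonneg hip0.le ?_
    refine ne_top_of_le_ne_top hIDt (lintegral_mono_ae ?_)
    filter_upwards [hgDom] with ω h using ENNReal.rpow_le_rpow h hp0.le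
  -- L^p convergence
  have hLp : Tendsto (fun n => eLpNorm (fun ω => T n ω - g ω) q μ) atTop (𝓝 0) := by
    have hFnm : ∀ n, AEMeasurable (fun ω => (‖T n ω - g ω‖₊ : ℝ≥0∞) ^ p) μ := fun n =>
      (ENNReal.continuous_rpow_const.measurable).comp_aemeasurable ((hT n).1.sub hgm).enorm
    have hbound : ∀ n, ∀ᵐ ω ∂μ, (‖T n ω - g ω‖₊ : ℝ≥0∞) ^ p ≤ 2^p * Dt ω ^ p := by
      intro n
      filter_upwards [hgDom] with ω hg
      calc (‖T n ω - g ω‖₊ : ℝ≥0∞) ^ p ≤ ((‖T n ω‖₊ : ℝ≥0∞) + (‖g ω‖₊ : ℝ≥0∞)) ^ p := by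
            refine ENNReal.rpow_le_rpow ?_ hp0.le
            exact_mod_cast nnnorm_sub_le _ _
        _ ≤ (Dt ω + Dt ω) ^ p := ENNReal.rpow_le_rpow (add_le_add (hTn_le n ω) hg) hp0.le
        _ = 2^p * Dt ω ^ p := by rw [← two_mul, ENNReal.mul_rpow_of_nonneg _ _ hp0.le]
    have hint : ∫⁻ ω, 2^p * Dt ω ^ p ∂μ ≠ ∞ := by
      have hDtp : AEMeasurable (fun ω => Dt ω ^ p) μ :=
        (ENNReal.continuous_rpow_const.measurable).comp_aemeasurable hDtm
      rw [lintegral_const_mul'' _ hDtp]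
      exact ENNReal.mul_ne_top (ENNReal.rpow_lt_top_of_nonneg hp0.le (by norm_num)).ne hIDt
    have hptw : ∀ᵐ ω ∂μ, Tendsto (fun n => (‖T n ω - g ω‖₊ : ℝ≥0∞) ^ p) atTop
        (𝓝 ((fun _ : Ω => (0:ℝ≥0∞)) ω)) := by
      filter_upwards [htendg] with ω hω
      have h1 : Tendsto (fun n => ‖T n ω - g ω‖) atTop (𝓝 0) :=
        tendsto_iff_norm_sub_tendsto_zero.mp hω
      have h2 : Tendsto (fun n => (‖T n ω - g ω‖₊ : ℝ≥0∞)) atTop (𝓝 0) := by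
        have h3 := (ENNReal.continuous_ofReal.tendsto 0).comp h1
        simp only [Function.comp_def, ofReal_norm_eq_coe_nnnorm, ENNReal.ofReal_zero] at h3
        exact h3
      have h4 := ((ENNReal.continuous_rpow_const (y := p)).tendsto 0).comp h2
      simp only [Function.comp_def, ENNReal.zero_rpow_of_pos hp0] at h4
      exact h4
    have hI0 : Tendsto (fun n => ∫⁻ ω, (‖T n ω - g ω‖₊ : ℝ≥0∞) ^ p ∂μ) atTop (𝓝 0) := by
      have h5 := tendsto_lintegral_of_dominated_convergence' _ hFnm hbound hint hptw
      simpa using h5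
    have heq : (fun n => eLpNorm (fun ω => T n ω - g ω) q μ)
        = fun n => (∫⁻ ω, (‖T n ω - g ω‖₊ : ℝ≥0∞) ^ p ∂μ) ^ (1/p) := by
      funext n
      rw [eLpNorm_eq_lintegral_rpow_nnnorm hq0 hqt, hqtr]
    rw [heq]
    have h6 := (ENNReal.continuous_rpow_const (y := 1/p)).tendsto 0 |>.comp hI0
    simp only [Function.comp_def, ENNReal.zero_rpow_of_pos hip0] at h6
    exact h6
  -- the maximal function
  have hstar : MemLp (fun ω => ⨆ n, ‖T n ω‖) q μ := by
    have heq : (fun ω => ⨆ n, ‖T n ω‖)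
        = fun ω => (⨆ n, ENNReal.ofReal ‖T n ω‖).toReal := by
      funext ω
      exact myReal_iSup_eq_toReal _ (fun n => norm_nonneg _)
    have hEm : AEMeasurable (fun ω => ⨆ n, ENNReal.ofReal ‖T n ω‖) μ :=
      AEMeasurable.iSup fun n =>
        ENNReal.measurable_ofReal.comp_aemeasurable (hT n).1.norm.aemeasurable
    have hsm : AEStronglyMeasurable (fun ω => ⨆ n, ‖T n ω‖) μ := by
      rw [heq]
      exact (aestronglyMeasurable_iff_aemeasurable).mpr
        (ENNReal.measurable_toReal.comp_aemeasurable hEm)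
    refine ⟨hsm, ?_⟩
    rw [eLpNorm_eq_lintegral_rpow_nnnorm hq0 hqt, hqtr]
    refine ENNReal.rpow_lt_top_of_nonneg hip0.le ?_
    refine ne_top_of_le_ne_top hIDt (lintegral_mono_ae ?_)
    filter_upwards [haeDt] with ω hdt
    refine ENNReal.rpow_le_rpow ?_ hp0.le
    have hnn : 0 ≤ ⨆ n, ‖T n ω‖ := Real.iSup_nonneg fun n => norm_nonneg _
    have hE_le : (⨆ n, ENNReal.ofReal ‖T n ω‖) ≤ Dt ω := by
      refine iSup_le fun n => ?_
      rw [ofReal_norm_eq_coe_nnnorm]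
      exact hTn_le n ω
    calc (‖⨆ n, ‖T n ω‖‖₊ : ℝ≥0∞) = ENNReal.ofReal (⨆ n, ‖T n ω‖) :=
          Real.ennnorm_eq_ofReal hnn
      _ ≤ Dt ω := by
          rw [myReal_iSup_eq_toReal _ (fun n => norm_nonneg _)]
          exact le_trans ENNReal.ofReal_toReal_le hE_le
  exact ⟨haeconv, ⟨g, hgmem, hLp⟩, hstar⟩
end

section
/- Let 1 < p < ∞, (G_n) a weight, (f_k) ⊂ L_p(μ, X) with sup_k ‖f_k‖_{L_p} < ∞ and sup_n ‖(1/G_n) ∑_{k=1}^n f_k‖_{L_p} = K < ∞. Let (W_n) be p-admissible w.r.t. (G_n) satisfying ∑_n (G_n/W_n)(1 − W_n/W_{n+1}) < ∞, and let (a_k) be a bounded complex sequence with ∑_k |a_k − a_{k+1}| G_k / W_k < ∞. Then the series ∑_{k=1}^∞ a_k f_k / W_k converges almost everywhere. -/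
open Filter Finset MeasureTheory

lemma my_ae_summable {Ω : Type*} [MeasurableSpace Ω] (μ : Measure Ω)
    (g : ℕ → Ω → ℝ) (hint : ∀ k, Integrable (g k) μ) (hnn : ∀ k ω, 0 ≤ g k ω)
    (C : ℕ → ℝ) (hC : Summable C) (hle : ∀ k, ∫ ω, g k ω ∂μ ≤ C k) :
    ∀ᵐ ω ∂μ, Summable (fun k => g k ω) := by
  have hCnn : ∀ k, 0 ≤ C k := fun k =>
    le_trans (integral_nonneg (fun ω => hnn k ω)) (hle k)
  have h1 : ∀ k, ∫⁻ ω, ENNReal.ofReal (g k ω) ∂μ = ENNReal.ofReal (∫ ω, g k ω ∂μ) :=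
    fun k => (ofReal_integral_eq_lintegral_ofReal (hint k) (ae_of_all _ (hnn k))).symm
  have hmeas : ∀ k, AEMeasurable (fun ω => ENNReal.ofReal (g k ω)) μ :=
    fun k => (hint k).aemeasurable.ennreal_ofReal
  have h2 : ∫⁻ ω, ∑' k, ENNReal.ofReal (g k ω) ∂μ < ⊤ := by
    rw [lintegral_tsum hmeas]
    calc ∑' k, ∫⁻ ω, ENNReal.ofReal (g k ω) ∂μ
        ≤ ∑' k, ENNReal.ofReal (C k) :=
          ENNReal.tsum_le_tsum fun k => by rw [h1 k]; exact ENNReal.ofReal_le_ofReal (hle k)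
      _ = ENNReal.ofReal (∑' k, C k) := (ENNReal.ofReal_tsum_of_nonneg hCnn hC).symm
      _ < ⊤ := ENNReal.ofReal_lt_top
  filter_upwards [ae_lt_top' (AEMeasurable.ennreal_tsum hmeas) h2.ne] with ω hω
  exact (ENNReal.summable_toReal hω.ne).congr fun k => by
    simp [ENNReal.toReal_ofReal (hnn k ω)]

lemma my_tendsto_zero {p : ℝ} (hp : 0 < p) {x : ℕ → ℝ} (hx : ∀ k, 0 ≤ x k)
    (h : Summable fun k => x k ^ p) : Tendsto x atTop (nhds 0) := by
  have h0 : Tendsto (fun k => x k ^ p) atTop (nhds 0) := h.tendsto_atTop_zero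
  have hc : ContinuousAt (fun t : ℝ => t ^ p⁻¹) 0 :=
    Real.continuousAt_rpow_const 0 p⁻¹ (Or.inr (by positivity))
  have h2 : Tendsto (fun k => (x k ^ p) ^ p⁻¹) atTop (nhds 0) := by
    simpa [Function.comp_def, Real.zero_rpow (by positivity : (p:ℝ)⁻¹ ≠ 0)] using hc.tendsto.comp h0
  exact h2.congr fun k => Real.rpow_rpow_inv (hx k) hp.ne'

set_option maxHeartbeats 2000000 in
/-- Theorem 3.3 of the paper: a.e. convergence of the modulated series
`∑ a_k f_k / W_k` for a bounded complex sequence `(a_k)` with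
`∑ |a_k - a_{k+1}| G_k / W_k < ∞`. -/
theorem stmt5 {Ω X : Type*} [MeasurableSpace Ω] [NormedAddCommGroup X] [NormedSpace ℂ X]
    [CompleteSpace X]
    (μ : Measure Ω) [IsProbabilityMeasure μ]
    (p : ℝ) (hp1 : 1 < p)
    -- `(G n)` and `(W n)` are weights
    (G : ℕ → ℝ) (hGmono : Monotone G) (hG1 : 1 ≤ G 1) (hGtop : Tendsto G atTop atTop)
    (W : ℕ → ℝ) (hWmono : Monotone W) (hW1 : 1 ≤ W 1) (hWtop : Tendsto W atTop atTop)
    -- `(W n)` is `p`-admissible w.r.t. `(G n)`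
    (nk : ℕ → ℕ) (hnk : StrictMono nk)
    (hadm1 : Summable (fun k => (G (nk k) / W (nk k)) ^ p))
    (hadm2 : Summable (fun k => (((nk (k + 1) : ℝ) - (nk k : ℝ)) / W (nk k)) ^ p))
    -- condition (3.7)
    (hT21 : Summable (fun n => (G n / W n) * (1 - W n / W (n + 1))))
    -- `(f k) ⊂ L_p(μ, X)` uniformly bounded with bounded `G`-normalized sums
    (f : ℕ → Ω → X) (hf : ∀ n, MemLp (f n) (ENNReal.ofReal p) μ)
    (A : ℝ) (hA : ∀ n, (∫ ω, ‖f n ω‖ ^ p ∂μ) ^ (1 / p) ≤ A)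
    (K : ℝ)
    (hK : ∀ n, (∫ ω, ‖(G n)⁻¹ • ∑ k ∈ Finset.Icc 1 n, f k ω‖ ^ p ∂μ) ^ (1 / p) ≤ K)
    -- `(a k)` bounded with `∑ |a_k - a_{k+1}| G_k / W_k < ∞`
    (a : ℕ → ℂ) (M : ℝ) (haM : ∀ k, ‖a k‖ ≤ M)
    (ha : Summable (fun k => ‖a k - a (k + 1)‖ * G k / W k)) :
    ∀ᵐ ω ∂μ, ∃ l : X,
      Tendsto (fun n => ∑ k ∈ Finset.Icc 1 n, ((W k : ℂ))⁻¹ • (a k • f k ω))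
        atTop (nhds l) := by
    -- basic facts about p and q
  have hp0 : (0:ℝ) < p := lt_trans one_pos hp1
  set q : ENNReal := ENNReal.ofReal p with hqdef
  have hqR : q.toReal = p := ENNReal.toReal_ofReal hp0.le
  have hq0 : q ≠ 0 := by simp [hqdef, ENNReal.ofReal_eq_zero, not_le, hp0]
  have hqT : q ≠ ⊤ := ENNReal.ofReal_ne_top
  have hq1 : (1:ENNReal) ≤ q := by
    rw [hqdef, ← ENNReal.ofReal_one]
    exact ENNReal.ofReal_le_ofReal hp1.le
  -- positivity of the weights
  have hWpos : ∀ n, 1 ≤ n → (0:ℝ) < W n := fun n hn =>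
    lt_of_lt_of_le one_pos (hW1.trans (hWmono hn))
  have hGpos : ∀ n, 1 ≤ n → (0:ℝ) < G n := fun n hn =>
    lt_of_lt_of_le one_pos (hG1.trans (hGmono hn))
  -- nonnegativity of constants
  have hA0 : 0 ≤ A := le_trans (Real.rpow_nonneg
    (integral_nonneg fun ω => Real.rpow_nonneg (norm_nonneg _) p) _) (hA 0)
  have hK0 : 0 ≤ K := le_trans (Real.rpow_nonneg
    (integral_nonneg fun ω => Real.rpow_nonneg (norm_nonneg _) p) _) (hK 0)
  have hM0 : 0 ≤ M := le_trans (norm_nonneg (a 0)) (haM 0)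
  -- the partial sums
  set S : ℕ → Ω → X := fun n ω => ∑ k ∈ Finset.Icc 1 n, f k ω with hSdef
  have hSmem : ∀ n, MemLp (S n) q μ := fun n =>
    memLp_finset_sum (Finset.Icc 1 n) (fun i _ => hf i)
  -- L^p bound on S n
  have hSnorm : ∀ n, 1 ≤ n → (∫ ω, ‖S n ω‖ ^ p ∂μ) ^ (1 / p) ≤ K * G n := by
    intro n hn
    have hGn : (0:ℝ) < G n := hGpos n hn
    have h2 : (∫ ω, ‖(G n)⁻¹ • S n ω‖ ^ p ∂μ) ^ (1 / p) ≤ K := hK n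
    have h1 : (fun ω => ‖(G n)⁻¹ • S n ω‖ ^ p) =
        fun ω => (G n)⁻¹ ^ p * ‖S n ω‖ ^ p := by
      funext ω
      rw [norm_smul, Real.mul_rpow (norm_nonneg _) (norm_nonneg _)]
      congr 2
      rw [Real.norm_eq_abs, abs_of_pos (inv_pos.2 hGn)]
    rw [h1, integral_const_mul] at h2
    have hI0 : 0 ≤ ∫ ω, ‖S n ω‖ ^ p ∂μ :=
      integral_nonneg fun ω => Real.rpow_nonneg (norm_nonneg _) p
    rw [Real.mul_rpow (by positivity) hI0, one_div,
      Real.rpow_rpow_inv (by positivity) hp0.ne'] at h2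
    have h3 := mul_le_mul_of_nonneg_left h2 hGn.le
    rw [← mul_assoc, mul_inv_cancel₀ hGn.ne', one_mul] at h3
    rw [one_div]
    linarith [h3]
  have hSint : ∀ n, 1 ≤ n → ∫ ω, ‖S n ω‖ ^ p ∂μ ≤ (K * G n) ^ p := by
    intro n hn
    have hI0 : 0 ≤ ∫ ω, ‖S n ω‖ ^ p ∂μ :=
      integral_nonneg fun ω => Real.rpow_nonneg (norm_nonneg _) p
    have := Real.rpow_le_rpow (Real.rpow_nonneg hI0 _) (hSnorm n hn) hp0.le
    rwa [one_div, Real.rpow_inv_rpow hI0 hp0.ne'] at this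
  -- eLpNorm bounds
  have heS : ∀ n, 1 ≤ n → eLpNorm (S n) q μ ≤ ENNReal.ofReal (K * G n) := by
    intro n hn
    rw [(hSmem n).eLpNorm_eq_integral_rpow_norm hq0 hqT, hqR]
    exact ENNReal.ofReal_le_ofReal (by rw [← one_div]; exact hSnorm n hn)
  -- L^1 bound on S n
  have hS1 : ∀ n, 1 ≤ n → ∫ ω, ‖S n ω‖ ∂μ ≤ K * G n := by
    intro n hn
    have h1 : eLpNorm (S n) 1 μ ≤ ENNReal.ofReal (K * G n) :=
      (eLpNorm_le_eLpNorm_of_exponent_le hq1 (hSmem n).1).trans (heS n hn)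
    have h2 : ENNReal.ofReal (∫ ω, ‖S n ω‖ ∂μ) = eLpNorm (S n) 1 μ := by
      rw [eLpNorm_one_eq_lintegral_enorm,
        ofReal_integral_eq_lintegral_ofReal ((hSmem n).integrable hq1).norm
          (ae_of_all _ fun ω => norm_nonneg _)]
      simp_rw [ofReal_norm_eq_enorm]
    rw [← h2] at h1
    exact (ENNReal.ofReal_le_ofReal_iff (mul_nonneg hK0 (hGpos n hn).le)).1 h1
  -- the subsequence, shifted to avoid index 0
  set m : ℕ → ℕ := fun k => nk (k + 1) with hmdef
  have hmmono : StrictMono m := fun i j h => hnk (by omega)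
  have hmself : ∀ k, k + 1 ≤ m k := fun k => hnk.le_apply
  have hm1 : ∀ k, 1 ≤ m k := fun k => le_trans (by omega) (hmself k)
  -- Block B : a.e. summability of ‖S (m k)‖^p / W (m k)^p
  have aeB : ∀ᵐ ω ∂μ, Summable (fun k => ‖S (m k) ω‖ ^ p / W (m k) ^ p) := by
    refine my_ae_summable μ _ (fun k => ?_)
      (fun k ω => div_nonneg (Real.rpow_nonneg (norm_nonneg _) p)
        (Real.rpow_nonneg (hWpos _ (hm1 k)).le p))
      (fun k => (K * G (m k)) ^ p / W (m k) ^ p) ?_ (fun k => ?_)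
    · -- integrability
      have h1 := (hSmem (m k)).integrable_norm_rpow hq0 hqT
      rw [hqR] at h1
      exact h1.div_const _
    · -- summability of the bounds
      have h1 : Summable (fun k => (G (m k) / W (m k)) ^ p) :=
        (summable_nat_add_iff 1).2 hadm1
      apply (h1.mul_left (K ^ p)).congr
      intro k
      have hW := hWpos (m k) (hm1 k)
      have hG := hGpos (m k) (hm1 k)
      rw [Real.div_rpow hG.le hW.le, Real.mul_rpow hK0 hG.le]
      ring
    · -- the integral bound
      rw [integral_div]
      exact (div_le_div_iff_of_pos_right (Real.rpow_pos_of_pos (hWpos _ (hm1 k)) p)).2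
        (hSint (m k) (hm1 k))
  -- Block C : gap sums
  set F : ℕ → Ω → ℝ := fun k ω => ∑ j ∈ Finset.Ioc (m k) (m (k + 1)), ‖f j ω‖ with hFdef
  have hFnn : ∀ k ω, 0 ≤ F k ω := fun k ω =>
    Finset.sum_nonneg fun j _ => norm_nonneg _
  have hFmem : ∀ k, MemLp (F k) q μ := fun k =>
    memLp_finset_sum (Finset.Ioc (m k) (m (k + 1))) (fun i _ => (hf i).norm)
  have hNcast : ∀ k, ((m (k+1) - m k : ℕ) : ℝ) = (m (k+1) : ℝ) - (m k : ℝ) :=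
    fun k => Nat.cast_sub (hmmono (Nat.lt_succ_self k)).le
  have hNnn : ∀ k, (0:ℝ) ≤ (m (k+1) : ℝ) - (m k : ℝ) := fun k => by
    rw [← hNcast k]; positivity
  have heF : ∀ k, eLpNorm (F k) q μ ≤
      ENNReal.ofReal (((m (k+1) : ℝ) - (m k : ℝ)) * A) := by
    intro k
    have h1 : eLpNorm (F k) q μ ≤ ∑ j ∈ Finset.Ioc (m k) (m (k + 1)), eLpNorm (f j) q μ := by
      have h2 := eLpNorm_sum_le
        (f := fun j (ω : Ω) => ‖f j ω‖) (s := Finset.Ioc (m k) (m (k + 1)))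
        (fun i _ => (hf i).1.norm) hq1
      simp only [eLpNorm_norm] at h2
      refine le_trans (le_of_eq ?_) h2
      congr 1
      funext ω
      simp [hFdef]
    refine h1.trans ?_
    have h3 : ∀ j, eLpNorm (f j) q μ ≤ ENNReal.ofReal A := by
      intro j
      rw [(hf j).eLpNorm_eq_integral_rpow_norm hq0 hqT]
      rw [hqR]
      exact ENNReal.ofReal_le_ofReal (by rw [← one_div]; exact hA j)
    calc ∑ j ∈ Finset.Ioc (m k) (m (k + 1)), eLpNorm (f j) q μ
        ≤ ∑ _j ∈ Finset.Ioc (m k) (m (k + 1)), ENNReal.ofReal A :=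
          Finset.sum_le_sum fun j _ => h3 j
      _ = (m (k+1) - m k : ℕ) * ENNReal.ofReal A := by
          rw [Finset.sum_const, Nat.card_Ioc, nsmul_eq_mul]
      _ = ENNReal.ofReal (((m (k+1) : ℝ) - (m k : ℝ)) * A) := by
          rw [ENNReal.ofReal_mul (hNnn k), ← hNcast k, ENNReal.ofReal_natCast]
  have hFint : ∀ k, ∫ ω, F k ω ^ p ∂μ ≤ (((m (k+1) : ℝ) - (m k : ℝ)) * A) ^ p := by
    intro k
    have h1 := heF k
    rw [(hFmem k).eLpNorm_eq_integral_rpow_norm hq0 hqT, hqR] at h1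
    have h2 : (∫ ω, ‖F k ω‖ ^ p ∂μ) ^ p⁻¹ ≤ ((m (k+1) : ℝ) - (m k : ℝ)) * A :=
      (ENNReal.ofReal_le_ofReal_iff (mul_nonneg (hNnn k) hA0)).1 h1
    have hI0 : 0 ≤ ∫ ω, ‖F k ω‖ ^ p ∂μ :=
      integral_nonneg fun ω => Real.rpow_nonneg (norm_nonneg _) p
    have h3 := Real.rpow_le_rpow (Real.rpow_nonneg hI0 _) h2 hp0.le
    rw [Real.rpow_inv_rpow hI0 hp0.ne'] at h3
    refine le_trans (le_of_eq ?_) h3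
    refine integral_congr_ae (ae_of_all _ fun ω => ?_)
    exact congrArg (· ^ p) (Real.norm_of_nonneg (hFnn k ω)).symm
  have aeC : ∀ᵐ ω ∂μ, Summable (fun k => F k ω ^ p / W (m k) ^ p) := by
    refine my_ae_summable μ _ (fun k => ?_)
      (fun k ω => div_nonneg (Real.rpow_nonneg (hFnn k ω) p)
        (Real.rpow_nonneg (hWpos _ (hm1 k)).le p))
      (fun k => (((m (k+1) : ℝ) - (m k : ℝ)) * A) ^ p / W (m k) ^ p) ?_ (fun k => ?_)
    · have h1 := (hFmem k).integrable_norm_rpow hq0 hqT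
      rw [hqR] at h1
      refine (h1.congr (ae_of_all _ fun ω => ?_)).div_const _
      exact congrArg (· ^ p) (Real.norm_of_nonneg (hFnn k ω))
    · have h1 : Summable (fun k =>
          (((m (k+1) : ℝ) - (m k : ℝ)) / W (m k)) ^ p) :=
        (summable_nat_add_iff 1).2 hadm2
      apply (h1.mul_left (A ^ p)).congr
      intro k
      have hW := hWpos (m k) (hm1 k)
      rw [Real.div_rpow (hNnn k) hW.le, Real.mul_rpow (hNnn k) hA0]
      ring
    · rw [integral_div]
      exact (div_le_div_iff_of_pos_right (Real.rpow_pos_of_pos (hWpos _ (hm1 k)) p)).2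
        (hFint k)
  -- Block D : the Abel coefficients
  set b : ℕ → ℂ := fun k => a k * (W k : ℂ)⁻¹ with hbdef
  have hb : ∀ j, 1 ≤ j → ‖b j - b (j + 1)‖ ≤
      ‖a j - a (j + 1)‖ / W j + M * (1 / W j - 1 / W (j + 1)) := by
    intro j hj
    have hWj : (0:ℝ) < W j := hWpos j hj
    have hWj1 : (0:ℝ) < W (j + 1) := hWpos (j + 1) (by omega)
    have h1 : b j - b (j + 1) =
        (a j - a (j + 1)) * (W j : ℂ)⁻¹ +
          a (j + 1) * ((W j : ℂ)⁻¹ - (W (j + 1) : ℂ)⁻¹) := by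
      rw [hbdef]; ring
    rw [h1]
    refine (norm_add_le _ _).trans (add_le_add ?_ ?_)
    · rw [norm_mul, norm_inv, Complex.norm_real, Real.norm_of_nonneg hWj.le,
        div_eq_mul_inv]
    · have h2 : ((W j : ℂ)⁻¹ - (W (j + 1) : ℂ)⁻¹) =
          ((1 / W j - 1 / W (j + 1) : ℝ) : ℂ) := by
        push_cast
        ring
      rw [norm_mul, h2, Complex.norm_real, Real.norm_of_nonneg
          (by rw [sub_nonneg]; exact one_div_le_one_div_of_le hWj (hWmono (by omega)))]
      exact mul_le_mul_of_nonneg_right (haM _) (by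
        rw [sub_nonneg]; exact one_div_le_one_div_of_le hWj (hWmono (by omega)))
  have aeD : ∀ᵐ ω ∂μ,
      Summable (fun k => ‖b (k + 1) - b (k + 2)‖ * ‖S (k + 1) ω‖) := by
    refine my_ae_summable μ _
      (fun k => (((hSmem (k + 1)).integrable hq1).norm).const_mul _)
      (fun k ω => mul_nonneg (norm_nonneg _) (norm_nonneg _))
      (fun k => ‖b (k + 1) - b (k + 2)‖ * (K * G (k + 1))) ?_ (fun k => ?_)
    · -- summability of the bounds
      have key : ∀ j, 1 ≤ j → ‖b j - b (j + 1)‖ * (K * G j) ≤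
          K * (‖a j - a (j + 1)‖ * G j / W j) +
            K * M * (G j / W j * (1 - W j / W (j + 1))) := by
        intro j hj
        have hWj : (0:ℝ) < W j := hWpos j hj
        have hWj1 : (0:ℝ) < W (j + 1) := hWpos (j + 1) (by omega)
        have hGj : (0:ℝ) < G j := hGpos j hj
        calc ‖b j - b (j + 1)‖ * (K * G j)
            ≤ (‖a j - a (j + 1)‖ / W j + M * (1 / W j - 1 / W (j + 1))) * (K * G j) :=
              mul_le_mul_of_nonneg_right (hb j hj) (mul_nonneg hK0 hGj.le)
          _ = K * (‖a j - a (j + 1)‖ * G j / W j) +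
              K * M * (G j / W j * (1 - W j / W (j + 1))) := by
              field_simp
      have hsum : Summable (fun j => K * (‖a j - a (j + 1)‖ * G j / W j) +
          K * M * (G j / W j * (1 - W j / W (j + 1)))) :=
        (ha.mul_left K).add (hT21.mul_left (K * M))
      have hsum1 : Summable (fun k => K * (‖a (k+1) - a (k + 2)‖ * G (k+1) / W (k+1)) +
          K * M * (G (k+1) / W (k+1) * (1 - W (k+1) / W (k + 2)))) :=
        (summable_nat_add_iff 1).2 hsum
      refine Summable.of_nonneg_of_le
        (fun k => mul_nonneg (norm_nonneg _) (mul_nonneg hK0 (hGpos (k+1) (by omega)).le))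
        (fun k => key (k+1) (by omega))
        hsum1
    · -- the integral bound
      rw [integral_const_mul]
      exact mul_le_mul_of_nonneg_left (hS1 (k + 1) (by omega)) (norm_nonneg _)
  -- pointwise conclusion
  have hIcc : ∀ N : ℕ, Finset.Icc 1 N = Finset.Ioc 0 N := fun N => by
    ext x; simp; omega
  filter_upwards [aeB, aeC, aeD] with ω hB hC hD
  -- convergence along the subsequence
  have h1 : Tendsto (fun k => ‖S (m k) ω‖ / W (m k)) atTop (nhds 0) := by
    refine my_tendsto_zero hp0
      (fun k => div_nonneg (norm_nonneg _) (hWpos _ (hm1 k)).le) ?_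
    exact hB.congr fun k =>
      (Real.div_rpow (norm_nonneg _) (hWpos _ (hm1 k)).le p).symm
  have h2 : Tendsto (fun k => F k ω / W (m k)) atTop (nhds 0) := by
    refine my_tendsto_zero hp0
      (fun k => div_nonneg (hFnn k ω) (hWpos _ (hm1 k)).le) ?_
    exact hC.congr fun k =>
      (Real.div_rpow (hFnn k ω) (hWpos _ (hm1 k)).le p).symm
  -- convergence of the full sequence ‖S n‖ / W n → 0
  set φ : ℕ → ℕ := fun n => Nat.findGreatest (fun k => m k ≤ n) n with hφdef
  have hφtop : Tendsto φ atTop atTop := by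
    refine tendsto_atTop_atTop.2 fun bnd => ⟨m bnd, fun n hn => ?_⟩
    exact Nat.le_findGreatest (le_trans (le_trans (by omega) (hmself bnd)) hn) hn
  have hφ1 : ∀ n, m 0 ≤ n → m (φ n) ≤ n := fun n hn =>
    Nat.findGreatest_spec (P := fun k => m k ≤ n) (Nat.zero_le n) hn
  have hφ2 : ∀ n, n < m (φ n + 1) := by
    intro n
    by_cases hc : φ n + 1 ≤ n
    · by_contra hlt
      push_neg at hlt
      exact Nat.findGreatest_is_greatest (Nat.lt_succ_self _) hc hlt
    · have := hmself (φ n + 1)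
      omega
  have hbound : ∀ n, m 0 ≤ n →
      ‖S n ω‖ / W n ≤ ‖S (m (φ n)) ω‖ / W (m (φ n)) + F (φ n) ω / W (m (φ n)) := by
    intro n hn
    have hk1 : m (φ n) ≤ n := hφ1 n hn
    have hk2 : n < m (φ n + 1) := hφ2 n
    have h1n : 1 ≤ n := le_trans (hm1 0) hn
    have hWn : (0:ℝ) < W n := hWpos n h1n
    have hWm : (0:ℝ) < W (m (φ n)) := hWpos _ (hm1 _)
    have hdecomp : S n ω = S (m (φ n)) ω + ∑ j ∈ Finset.Ioc (m (φ n)) n, f j ω := by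
      show (∑ j ∈ Finset.Icc 1 n, f j ω) =
        (∑ j ∈ Finset.Icc 1 (m (φ n)), f j ω) + ∑ j ∈ Finset.Ioc (m (φ n)) n, f j ω
      rw [hIcc n, hIcc (m (φ n)),
        Finset.sum_Ioc_consecutive _ (Nat.zero_le _) hk1]
    have hnorm : ‖S n ω‖ ≤ ‖S (m (φ n)) ω‖ + F (φ n) ω := by
      rw [hdecomp]
      refine (norm_add_le _ _).trans (add_le_add_right ?_ _)
      refine (norm_sum_le _ _).trans ?_
      exact Finset.sum_le_sum_of_subset_of_nonneg
        (Finset.Ioc_subset_Ioc le_rfl hk2.le) (fun j _ _ => norm_nonneg _)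
    calc ‖S n ω‖ / W n ≤ (‖S (m (φ n)) ω‖ + F (φ n) ω) / W (m (φ n)) :=
          div_le_div₀ (add_nonneg (norm_nonneg _) (hFnn _ ω)) hnorm hWm (hWmono hk1)
      _ = ‖S (m (φ n)) ω‖ / W (m (φ n)) + F (φ n) ω / W (m (φ n)) := add_div _ _ _
  have h3 : Tendsto (fun n => ‖S n ω‖ / W n) atTop (nhds 0) := by
    refine squeeze_zero'
      (eventually_atTop.2 ⟨1, fun n hn => div_nonneg (norm_nonneg _) (hWpos n hn).le⟩)
      (eventually_atTop.2 ⟨m 0, hbound⟩) ?_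
    have := (h1.add h2).comp hφtop
    simpa [Function.comp_def] using this
  -- absolute convergence of the Abel series
  have h4 : Summable (fun k => (b k - b (k + 1)) • S k ω) := by
    apply Summable.of_norm
    have h5 : Summable (fun k => ‖b (k + 1) - b (k + 1 + 1)‖ * ‖S (k + 1) ω‖) :=
      hD.congr fun k => by norm_num
    exact ((summable_nat_add_iff 1).1 h5).congr fun k => (norm_smul _ _).symm
  -- Abel summation identity
  have hAbel : ∀ n, (∑ k ∈ Finset.Icc 1 n, (W k : ℂ)⁻¹ • (a k • f k ω)) =
      b n • S n ω + ∑ k ∈ Finset.range n, (b k - b (k + 1)) • S k ω := by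
    intro n
    induction n with
    | zero =>
      have : Finset.Icc 1 0 = (∅ : Finset ℕ) := Finset.Icc_eq_empty (by omega)
      simp [hSdef, this]
    | succ n ih =>
      rw [Finset.sum_Icc_succ_top (by omega : 1 ≤ n + 1), ih]
      have hS : S (n + 1) ω = S n ω + f (n + 1) ω := by
        show (∑ k ∈ Finset.Icc 1 (n + 1), f k ω) = _
        rw [Finset.sum_Icc_succ_top (by omega : 1 ≤ n + 1)]
      have hsmul : (W (n + 1) : ℂ)⁻¹ • (a (n + 1) • f (n + 1) ω) =
          b (n + 1) • f (n + 1) ω := by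
        rw [smul_smul]
        simp only [hbdef]
        rw [mul_comm]
      rw [Finset.sum_range_succ, hS, hsmul, smul_add, sub_smul]
      abel
  -- the limit of the boundary term
  have h6 : Tendsto (fun n => b n • S n ω) atTop (nhds (0 : X)) := by
    rw [tendsto_zero_iff_norm_tendsto_zero]
    refine squeeze_zero' (g := fun n => M * (‖S n ω‖ / W n))
      (Eventually.of_forall fun n => norm_nonneg _)
      (eventually_atTop.2 ⟨1, fun n hn => ?_⟩) ?_
    · calc ‖b n • S n ω‖ = ‖b n‖ * ‖S n ω‖ := norm_smul _ _
        _ ≤ (M * (W n)⁻¹) * ‖S n ω‖ := by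
            refine mul_le_mul_of_nonneg_right ?_ (norm_nonneg _)
            have hbn : ‖b n‖ = ‖a n‖ * (W n)⁻¹ := by
              simp only [hbdef]
              rw [norm_mul, norm_inv, Complex.norm_real,
                Real.norm_of_nonneg (hWpos n hn).le]
            rw [hbn]
            exact mul_le_mul_of_nonneg_right (haM n) (inv_nonneg.2 (hWpos n hn).le)
        _ = M * (‖S n ω‖ / W n) := by ring
    · simpa using h3.const_mul M
  refine ⟨∑' k, (b k - b (k + 1)) • S k ω, ?_⟩
  have h7 := h4.hasSum.tendsto_sum_nat
  have h8 := h6.add h7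
  rw [zero_add] at h8
  exact Tendsto.congr (fun n => (hAbel n).symm) h8
end

section
/- Let β ∈ (0,1], p > 1, G_n = n^{1−β}, and W_n = n^{1−δ} with δ ∈ [0, (p−1)β/p). Then (W_n) is p-admissible with respect to (G_n); specifically, with n_k = ⌊k^{1/β}⌋ + 1 one has ∑_k (G_{n_k}/W_{n_k})^p < ∞ and ∑_k ((n_{k+1}−n_k)/W_{n_k})^p < ∞. -/
open Filter Finset
open scoped NNReal

/-- `x^s + 1 ≤ (x+1)^s` for `x ≥ 0`, `s ≥ 1`. -/
lemma aux_add_one_rpow {x : ℝ} (hx : 0 ≤ x) {s : ℝ} (hs : 1 ≤ s) :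
    x ^ s + 1 ≤ (x + 1) ^ s := by
  have h := NNReal.add_rpow_le_rpow_add (⟨x, hx⟩ : ℝ≥0) 1 hs
  have h' := congrArg (fun t : ℝ≥0 => (t : ℝ)) (rfl : ((⟨x, hx⟩ : ℝ≥0) + 1) = ⟨x + 1, by positivity⟩)
  have := (NNReal.coe_le_coe).mpr h
  simp [NNReal.coe_rpow, NNReal.coe_add, NNReal.coe_rpow (⟨x, hx⟩ : ℝ≥0) s, NNReal.coe_add (⟨x, hx⟩ : ℝ≥0) 1] at this; exact this

/-- Tangent-line bound: `(x+1)^s - x^s ≤ s * (x+1)^(s-1)` for `x ≥ 1`, `s ≥ 1`. -/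
lemma aux_rpow_diff {x : ℝ} (hx : 1 ≤ x) {s : ℝ} (hs : 1 ≤ s) :
    (x + 1) ^ s - x ^ s ≤ s * (x + 1) ^ (s - 1) := by
  have hx0 : 0 < x := lt_of_lt_of_le one_pos hx
  have hx1 : 0 < x + 1 := by linarith
  have hu : -1 ≤ -1 / (x + 1) := by
    rw [neg_div, neg_le_neg_iff]
    rw [div_le_one hx1]
    linarith
  have hb := one_add_mul_self_le_rpow_one_add hu hs
  have h1 : 1 + -1 / (x + 1) = x / (x + 1) := by field_simp; ring
  rw [h1] at hb
  have h2 : (x / (x + 1)) ^ s = x ^ s / (x + 1) ^ s := Real.div_rpow hx0.le hx1.le s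
  rw [h2] at hb
  have hpow : 0 < (x + 1) ^ s := Real.rpow_pos_of_pos hx1 s
  have hb' : (1 + s * (-1 / (x + 1))) * (x + 1) ^ s ≤ x ^ s := by
    rw [← le_div_iff₀ hpow]; exact hb
  have h3 : (x + 1) ^ (s - 1) = (x + 1) ^ s / (x + 1) := Real.rpow_sub_one hx1.ne' s
  have h4 : (1 + s * (-1 / (x + 1))) * (x + 1) ^ s
      = (x + 1) ^ s - s * ((x + 1) ^ s / (x + 1)) := by
    field_simp; ring
  rw [h4] at hb'
  rw [h3]
  linarith

/-- Example A.1 of the paper. With `G_n = n^{1-β}`, `W_n = n^{1-δ}`,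
`0 ≤ δ < (p-1)β/p`, the weight `(W n)` is `p`-admissible w.r.t. `(G n)`, witnessed
by `n_k = ⌊k^{1/β}⌋ + 1`. -/
theorem stmt9 (β p δ : ℝ) (hβ0 : 0 < β) (hβ1 : β ≤ 1) (hp : 1 < p)
    (hδ0 : 0 ≤ δ) (hδ : δ < (p - 1) * β / p)
    (G W : ℕ → ℝ)
    (hG : ∀ n : ℕ, G n = (n : ℝ) ^ (1 - β))
    (hW : ∀ n : ℕ, W n = (n : ℝ) ^ (1 - δ))
    (nk : ℕ → ℕ) (hnk : ∀ k : ℕ, nk k = ⌊(k : ℝ) ^ (1 / β)⌋₊ + 1) :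
    StrictMono nk ∧
      Summable (fun k => (G (nk k) / W (nk k)) ^ p) ∧
      Summable (fun k => (((nk (k + 1) : ℝ) - (nk k : ℝ)) / W (nk k)) ^ p) := by
  have hp0 : (0 : ℝ) < p := lt_trans one_pos hp
  set s : ℝ := 1 / β with hs_def
  have hs1 : 1 ≤ s := by rw [hs_def, le_div_iff₀ hβ0]; linarith
  have hsβ : s * β = 1 := by rw [hs_def]; field_simp
  have hδβ : δ < β := by
    have : (p - 1) * β / p < β := by
      rw [div_lt_iff₀ hp0]; nlinarith
    linarith
  -- key exponent
  have hδp : δ * p < (p - 1) * β := by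
    have := (lt_div_iff₀ hp0).mp hδ; linarith
  have he : (s * δ - 1) * p < -1 := by
    have h1 : s * δ * p < p - 1 := by
      have : s * δ * p = δ * p / β := by rw [hs_def]; ring
      rw [this, div_lt_iff₀ hβ0]; nlinarith
    nlinarith
  -- basic facts on nk
  have hfloor_lt : ∀ k : ℕ, ((k : ℝ)) ^ s < (nk k : ℝ) := by
    intro k
    rw [hnk k]
    push_cast
    exact Nat.lt_floor_add_one _
  have hle : ∀ k : ℕ, (nk k : ℝ) ≤ (k : ℝ) ^ s + 1 := by
    intro k
    rw [hnk k]
    push_cast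
    have := Nat.floor_le (Real.rpow_nonneg (Nat.cast_nonneg k) s)
    linarith
  have hpos : ∀ k : ℕ, 0 < (nk k : ℝ) := by
    intro k
    rw [hnk k]
    positivity
  -- strict monotonicity
  have hmono : StrictMono nk := by
    apply strictMono_nat_of_lt_succ
    intro k
    rw [hnk k, hnk (k + 1)]
    have h1 : ⌊(k : ℝ) ^ s⌋₊ + 1 ≤ ⌊((k + 1 : ℕ) : ℝ) ^ s⌋₊ := by
      apply Nat.le_floor
      push_cast
      calc ((⌊(k : ℝ) ^ s⌋₊ : ℝ) + 1) ≤ (k : ℝ) ^ s + 1 := by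
            have := Nat.floor_le (Real.rpow_nonneg (Nat.cast_nonneg k) s)
            linarith
        _ ≤ ((k : ℝ) + 1) ^ s := aux_add_one_rpow (Nat.cast_nonneg k) hs1
    omega
  refine ⟨hmono, ?_, ?_⟩
  -- the comparison series
  · rw [← summable_nat_add_iff 1]
    have hsum : Summable (fun k : ℕ => ((k + 1 : ℕ) : ℝ) ^ ((s * δ - 1) * p)) :=
      (summable_nat_add_iff 1).mpr (Real.summable_nat_rpow.mpr he)
    apply Summable.of_nonneg_of_le _ _ hsum
    · intro k
      apply Real.rpow_nonneg
      apply div_nonneg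
      · rw [hG]; exact Real.rpow_nonneg (Nat.cast_nonneg _) _
      · rw [hW]; exact Real.rpow_nonneg (Nat.cast_nonneg _) _
    · intro k
      set m : ℕ := nk (k + 1) with hm_def
      have hm : 0 < (m : ℝ) := hpos (k + 1)
      have hterm : (G m / W m) ^ p = (m : ℝ) ^ ((δ - β) * p) := by
        rw [hG, hW, ← Real.rpow_sub hm, show (1 - β) - (1 - δ) = δ - β by ring,
          ← Real.rpow_mul hm.le]
      rw [hterm]
      have ha0 : (0 : ℝ) < ((k + 1 : ℕ) : ℝ) := by positivity
      have hbase : ((k + 1 : ℕ) : ℝ) ^ s ≤ (m : ℝ) := (hfloor_lt (k + 1)).le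
      have hbasepos : (0 : ℝ) < ((k + 1 : ℕ) : ℝ) ^ s := Real.rpow_pos_of_pos ha0 s
      have hexp : (δ - β) * p ≤ 0 := by nlinarith
      calc (m : ℝ) ^ ((δ - β) * p)
          ≤ (((k + 1 : ℕ) : ℝ) ^ s) ^ ((δ - β) * p) :=
            Real.rpow_le_rpow_of_nonpos hbasepos hbase hexp
        _ = ((k + 1 : ℕ) : ℝ) ^ (s * ((δ - β) * p)) := (Real.rpow_mul ha0.le _ _).symm
        _ = ((k + 1 : ℕ) : ℝ) ^ ((s * δ - 1) * p) := by
            rw [show s * ((δ - β) * p) = (s * δ - s * β) * p by ring, hsβ]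
  · rw [← summable_nat_add_iff 1]
    set C : ℝ := s * 2 ^ (s - 1) + 1 with hC_def
    have hC0 : 0 ≤ C := by positivity
    have hsum : Summable (fun k : ℕ => C ^ p * ((k + 1 : ℕ) : ℝ) ^ ((s * δ - 1) * p)) :=
      ((summable_nat_add_iff 1).mpr (Real.summable_nat_rpow.mpr he)).mul_left _
    apply Summable.of_nonneg_of_le _ _ hsum
    · intro k
      apply Real.rpow_nonneg
      apply div_nonneg
      · have := hmono (Nat.lt_succ_self (k + 1))
        have : (nk (k + 1) : ℝ) ≤ (nk (k + 1 + 1) : ℝ) := by exact_mod_cast this.le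
        linarith
      · rw [hW]; exact Real.rpow_nonneg (Nat.cast_nonneg _) _
    · intro k
      set a : ℝ := ((k + 1 : ℕ) : ℝ) with ha_def
      have ha1 : 1 ≤ a := by rw [ha_def]; exact_mod_cast Nat.succ_le_succ (Nat.zero_le k)
      have ha0 : 0 < a := lt_of_lt_of_le one_pos ha1
      -- numerator bound
      have hnum : (nk (k + 1 + 1) : ℝ) - (nk (k + 1) : ℝ) ≤ C * a ^ (s - 1) := by
        have h1 : (nk (k + 1 + 1) : ℝ) ≤ (a + 1) ^ s + 1 := by
          have := hle (k + 1 + 1)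
          have hcast : ((k + 1 + 1 : ℕ) : ℝ) = a + 1 := by rw [ha_def]; push_cast; ring
          rwa [hcast] at this
        have h2 : a ^ s < (nk (k + 1) : ℝ) := hfloor_lt (k + 1)
        have h3 : (a + 1) ^ s - a ^ s ≤ s * (a + 1) ^ (s - 1) := aux_rpow_diff ha1 hs1
        have h4 : (a + 1) ^ (s - 1) ≤ 2 ^ (s - 1) * a ^ (s - 1) := by
          rw [← Real.mul_rpow (by norm_num) ha0.le]
          exact Real.rpow_le_rpow (by linarith) (by linarith) (by linarith)
        have h5 : (1 : ℝ) ≤ a ^ (s - 1) := Real.one_le_rpow ha1 (by linarith)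
        have hs0 : (0 : ℝ) ≤ s := by linarith
        nlinarith [Real.rpow_nonneg ha0.le (s - 1), Real.rpow_nonneg (by linarith : (0:ℝ) ≤ a + 1) (s - 1)]
      -- denominator bound
      have hδ1 : δ ≤ 1 := by linarith
      have hden : a ^ (s * (1 - δ)) ≤ W (nk (k + 1)) := by
        rw [hW, Real.rpow_mul ha0.le]
        exact Real.rpow_le_rpow (Real.rpow_nonneg ha0.le s) (hfloor_lt (k + 1)).le (by linarith)
      have hdenpos : (0 : ℝ) < a ^ (s * (1 - δ)) := Real.rpow_pos_of_pos ha0 _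
      have hdiv : ((nk (k + 1 + 1) : ℝ) - (nk (k + 1) : ℝ)) / W (nk (k + 1))
          ≤ C * a ^ (s * δ - 1) := by
        calc ((nk (k + 1 + 1) : ℝ) - (nk (k + 1) : ℝ)) / W (nk (k + 1))
            ≤ (C * a ^ (s - 1)) / a ^ (s * (1 - δ)) := by
              apply div_le_div₀ (by positivity) hnum hdenpos hden
          _ = C * a ^ (s * δ - 1) := by
              rw [mul_div_assoc, ← Real.rpow_sub ha0,
                show (s - 1) - s * (1 - δ) = s * δ - 1 by ring]
      have hnn : 0 ≤ ((nk (k + 1 + 1) : ℝ)) - (nk (k + 1) : ℝ) := by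
        have := (hmono (Nat.lt_succ_self (k + 1))).le
        have : (nk (k + 1) : ℝ) ≤ (nk (k + 1 + 1) : ℝ) := by exact_mod_cast this
        linarith
      have hWnn : 0 ≤ W (nk (k + 1)) := by
        rw [hW]; exact Real.rpow_nonneg (Nat.cast_nonneg _) _
      calc ((((nk (k + 1 + 1) : ℝ)) - (nk (k + 1) : ℝ)) / W (nk (k + 1))) ^ p
          ≤ (C * a ^ (s * δ - 1)) ^ p :=
            Real.rpow_le_rpow (div_nonneg hnn hWnn) hdiv hp0.le
        _ = C ^ p * a ^ ((s * δ - 1) * p) := by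
            rw [Real.mul_rpow hC0 (Real.rpow_nonneg ha0.le _), ← Real.rpow_mul ha0.le]
end

section
/- Let β ∈ (0,1], γ ≥ 1, p > 1, G̃_n = n^{1−β} (log n)^γ, and W̃_n = n^{1−δ} (log n)^γ with δ ∈ [0, (p−1)β/p). Then (W̃_n) is p-admissible with respect to (G̃_n), witnessed by n_k = ⌊k^{1/β}⌋ + 1. -/
open Filter Finset

set_option maxHeartbeats 2000000 in
/-- Example A.2 of the paper. With `G̃_n = n^{1-β} (log n)^γ`,
`W̃_n = n^{1-δ} (log n)^γ`, `0 ≤ δ < (p-1)β/p`, `γ ≥ 1`, the weight `(W̃ n)` is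
`p`-admissible w.r.t. `(G̃ n)`, witnessed by `n_k = ⌊k^{1/β}⌋ + 1`. -/
theorem stmt10 (β p δ γ : ℝ) (hβ0 : 0 < β) (hβ1 : β ≤ 1) (hp : 1 < p)
    (hγ : 1 ≤ γ) (hδ0 : 0 ≤ δ) (hδ : δ < (p - 1) * β / p)
    (G W : ℕ → ℝ)
    (hG : ∀ n : ℕ, G n = (n : ℝ) ^ (1 - β) * (Real.log n) ^ γ)
    (hW : ∀ n : ℕ, W n = (n : ℝ) ^ (1 - δ) * (Real.log n) ^ γ)
    (nk : ℕ → ℕ) (hnk : ∀ k : ℕ, nk k = ⌊(k : ℝ) ^ (1 / β)⌋₊ + 1) :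
    StrictMono nk ∧
      Summable (fun k => (G (nk k) / W (nk k)) ^ p) ∧
      Summable (fun k => (((nk (k + 1) : ℝ) - (nk k : ℝ)) / W (nk k)) ^ p) := by
  have hp0 : (0:ℝ) < p := by linarith
  set a : ℝ := 1/β with hadef
  have ha0 : 0 < a := by positivity
  have ha1 : 1 ≤ a := by rw [hadef, le_div_iff₀ hβ0]; linarith
  have haβ : a * β = 1 := by
    rw [hadef, one_div, inv_mul_cancel₀ hβ0.ne']
  -- δ < 1
  have hδp : δ * p < (p - 1) * β := by
    have := (lt_div_iff₀ hp0).mp hδ; linarith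
  have hδ1 : δ < 1 := by nlinarith
  -- the common exponent
  set r : ℝ := (β - δ) * p / β with hrdef
  have hr : 1 < r := by
    rw [hrdef, lt_div_iff₀ hβ0]; nlinarith
  -- floor bounds
  have hlow : ∀ k : ℕ, (k:ℝ) ^ a < (nk k : ℝ) := by
    intro k
    rw [hnk]; push_cast
    exact Nat.lt_floor_add_one _
  have hupp : ∀ k : ℕ, (nk k : ℝ) ≤ (k:ℝ) ^ a + 1 := by
    intro k
    rw [hnk]; push_cast
    have := Nat.floor_le (by positivity : (0:ℝ) ≤ (k:ℝ) ^ a)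
    linarith
  -- strict monotonicity
  have hsm : StrictMono nk := by
    apply strictMono_nat_of_lt_succ
    intro k
    rcases Nat.eq_zero_or_pos k with rfl | hk1
    · rw [hnk, hnk]
      have h0 : ((0:ℕ):ℝ) ^ a = 0 := by
        rw [Nat.cast_zero, Real.zero_rpow (by positivity)]
      have h1 : ((1:ℕ):ℝ) ^ a = 1 := by rw [Nat.cast_one, Real.one_rpow]
      rw [h0, h1]
      simp
    · have hx1 : (1:ℝ) ≤ (k:ℝ) := by exact_mod_cast hk1
      have hx0 : (0:ℝ) < (k:ℝ) := by linarith
      -- Bernoulli : (1 + 1/k)^a ≥ 1 + a/k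
      have hb : 1 + a * (1/(k:ℝ)) ≤ (1 + 1/(k:ℝ)) ^ a := by
        apply one_add_mul_self_le_rpow_one_add _ ha1
        have : (0:ℝ) ≤ 1/(k:ℝ) := by positivity
        linarith
      have hmul : ((k:ℝ) * (1 + 1/(k:ℝ))) ^ a = (k:ℝ)^a * (1 + 1/(k:ℝ))^a :=
        Real.mul_rpow (by positivity) (by positivity)
      have hk1a : (k:ℝ) * (1 + 1/(k:ℝ)) = (k:ℝ) + 1 := by field_simp
      have hka : 1 ≤ (k:ℝ)^a := by
        calc (1:ℝ) = 1 ^ a := (Real.one_rpow a).symm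
        _ ≤ (k:ℝ)^a := Real.rpow_le_rpow zero_le_one hx1 (by linarith)
      have hstep : (k:ℝ)^a + 1 ≤ ((k:ℝ)+1)^a := by
        have h2 : (k:ℝ)^a * (1 + a * (1/(k:ℝ))) ≤ (k:ℝ)^a * (1 + 1/(k:ℝ))^a :=
          mul_le_mul_of_nonneg_left hb (by positivity)
        have h3 : (k:ℝ)^a + 1 ≤ (k:ℝ)^a * (1 + a * (1/(k:ℝ))) := by
          have hdiv : 1 ≤ (k:ℝ)^a * (a * (1/(k:ℝ))) := by
            have : (k:ℝ) ^ (1:ℝ) ≤ (k:ℝ)^a := Real.rpow_le_rpow_of_exponent_le hx1 ha1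
            rw [Real.rpow_one] at this
            rw [show (k:ℝ)^a * (a * (1/(k:ℝ))) = a * ((k:ℝ)^a / (k:ℝ)) by ring]
            have h4 : 1 ≤ (k:ℝ)^a / (k:ℝ) := (one_le_div hx0).mpr this
            nlinarith
          nlinarith
        calc (k:ℝ)^a + 1 ≤ (k:ℝ)^a * (1 + 1/(k:ℝ))^a := le_trans h3 h2
        _ = ((k:ℝ)+1)^a := by rw [← hmul, hk1a]
      rw [hnk, hnk]
      have hfl : ⌊(k:ℝ)^a⌋₊ + 1 ≤ ⌊((k+1:ℕ):ℝ)^a⌋₊ := by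
        push_cast
        calc ⌊(k:ℝ)^a⌋₊ + 1 = ⌊(k:ℝ)^a + 1⌋₊ := by
              rw [Nat.floor_add_one (by positivity)]
        _ ≤ ⌊((k:ℝ)+1)^a⌋₊ := Nat.floor_le_floor hstep
      omega
  -- basic positivity facts
  have hδβ : δ < β := by nlinarith
  have hW0 : ∀ m : ℕ, 0 ≤ W m := by
    intro m
    rw [hW]
    have h1 : (0:ℝ) ≤ Real.log m := Real.log_natCast_nonneg m
    positivity
  have hG0 : ∀ m : ℕ, 0 ≤ G m := by
    intro m
    rw [hG]
    have h1 : (0:ℝ) ≤ Real.log m := Real.log_natCast_nonneg m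
    positivity
  -- comparison machinery
  have hsum : Summable (fun k : ℕ => ((k:ℝ)) ^ (-r)) :=
    Real.summable_nat_rpow.mpr (by linarith)
  have key : ∀ (C : ℝ) (f : ℕ → ℝ), (∀ k, 0 ≤ f k) →
      (∀ k, 3 ≤ k → f k ≤ C * (k:ℝ) ^ (-r)) → Summable f := by
    intro C f h0 hle
    rw [← summable_nat_add_iff 3]
    exact Summable.of_nonneg_of_le (fun k => h0 _) (fun k => hle _ (by omega))
      ((summable_nat_add_iff 3).2 (hsum.mul_left C))
  -- shared facts for k ≥ 3
  have hlog3 : 1 < Real.log 3 := by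
    rw [Real.lt_log_iff_exp_lt (by norm_num)]
    exact Real.exp_one_lt_d9.trans (by norm_num)
  have hfacts : ∀ k : ℕ, 3 ≤ k →
      (1:ℝ) < (nk k : ℝ) ∧ 1 ≤ Real.log (nk k) ∧
      (k:ℝ) ^ (a*(1-δ)) ≤ W (nk k) ∧ 1 ≤ (Real.log (nk k)) ^ γ := by
    intro k hk
    have hx3 : (3:ℝ) ≤ (k:ℝ) := by exact_mod_cast hk
    have hx0 : (0:ℝ) < (k:ℝ) := by linarith
    have hxa0 : (0:ℝ) < (k:ℝ)^a := Real.rpow_pos_of_pos hx0 a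
    have hxa1 : (1:ℝ) ≤ (k:ℝ)^a := by
      calc (1:ℝ) = 1 ^ a := (Real.one_rpow a).symm
      _ ≤ (k:ℝ)^a := Real.rpow_le_rpow zero_le_one (by linarith) (by linarith)
    have hn1 : (1:ℝ) < (nk k : ℝ) := lt_of_le_of_lt hxa1 (hlow k)
    have hn0 : (0:ℝ) < (nk k : ℝ) := by linarith
    have hlogn : 1 ≤ Real.log (nk k) := by
      have h1 : Real.log ((k:ℝ)^a) ≤ Real.log (nk k) :=
        Real.log_le_log hxa0 (hlow k).le
      have h2 : Real.log ((k:ℝ)^a) = a * Real.log (k:ℝ) := Real.log_rpow hx0 a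
      have h3 : Real.log 3 ≤ Real.log (k:ℝ) := Real.log_le_log (by norm_num) hx3
      have h4 : Real.log (k:ℝ) ≤ a * Real.log (k:ℝ) := by nlinarith
      linarith
    have hLγ : 1 ≤ (Real.log (nk k)) ^ γ := by
      have := Real.rpow_le_rpow_of_exponent_le hlogn (le_trans zero_le_one hγ : (0:ℝ) ≤ γ)
      rwa [Real.rpow_zero] at this
    refine ⟨hn1, hlogn, ?_, hLγ⟩
    rw [hW]
    have h5 : (k:ℝ) ^ (a*(1-δ)) ≤ ((nk k : ℝ)) ^ (1-δ) := by
      rw [Real.rpow_mul hx0.le]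
      exact Real.rpow_le_rpow hxa0.le (hlow k).le (by linarith)
    calc (k:ℝ) ^ (a*(1-δ)) = (k:ℝ) ^ (a*(1-δ)) * 1 := (mul_one _).symm
    _ ≤ ((nk k : ℝ)) ^ (1-δ) * (Real.log (nk k)) ^ γ :=
        mul_le_mul h5 hLγ zero_le_one (Real.rpow_nonneg hn0.le _)
  refine ⟨hsm, ?_, ?_⟩
  · -- first summability
    apply key 1 _ (fun k => Real.rpow_nonneg (div_nonneg (hG0 _) (hW0 _)) p)
    intro k hk
    obtain ⟨hn1, hlogn, hWlb, hLγ⟩ := hfacts k hk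
    have hx3 : (3:ℝ) ≤ (k:ℝ) := by exact_mod_cast hk
    have hx0 : (0:ℝ) < (k:ℝ) := by linarith
    have hxa0 : (0:ℝ) < (k:ℝ)^a := Real.rpow_pos_of_pos hx0 a
    have hn0 : (0:ℝ) < (nk k : ℝ) := by linarith
    have hL0 : (0:ℝ) < (Real.log (nk k)) ^ γ := by linarith
    have hGW : G (nk k) / W (nk k) = ((nk k : ℝ)) ^ (δ - β) := by
      rw [hG, hW, mul_div_mul_right _ _ (ne_of_gt hL0), ← Real.rpow_sub hn0]
      congr 1
      ring
    have hfk : (G (nk k) / W (nk k)) ^ p = ((nk k : ℝ)) ^ ((δ - β) * p) := by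
      rw [hGW, ← Real.rpow_mul hn0.le]
    rw [hfk, one_mul]
    have hb1 : ((nk k:ℝ)) ^ ((δ-β)*p) ≤ ((k:ℝ)^a) ^ ((δ-β)*p) :=
      Real.rpow_le_rpow_of_nonpos hxa0 (hlow k).le (by nlinarith)
    have hb2 : ((k:ℝ)^a) ^ ((δ-β)*p) = (k:ℝ)^(-r) := by
      rw [← Real.rpow_mul hx0.le]
      congr 1
      rw [hrdef, hadef]
      field_simp
      ring
    rw [← hb2]
    exact hb1
  · -- second summability
    refine key ((a*2^(a-1)+1)^p) _ ?_ ?_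
    · intro k
      apply Real.rpow_nonneg
      apply div_nonneg _ (hW0 _)
      have h0 := hsm.monotone (Nat.le_succ k)
      have h1 : (nk k : ℝ) ≤ (nk (k+1) : ℝ) := by exact_mod_cast h0
      linarith
    · intro k hk
      obtain ⟨hn1, hlogn, hWlb, hLγ⟩ := hfacts k hk
      have hx3 : (3:ℝ) ≤ (k:ℝ) := by exact_mod_cast hk
      have hx0 : (0:ℝ) < (k:ℝ) := by linarith
      have hxa0 : (0:ℝ) < (k:ℝ)^a := Real.rpow_pos_of_pos hx0 a
      set x : ℝ := (k:ℝ) with hxdef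
      have hx10 : (0:ℝ) < x + 1 := by linarith
      have hs : -1 ≤ -(1/(x+1)) := by
        have h1 : 1/(x+1) ≤ 1 := by rw [div_le_one hx10]; linarith
        linarith
      have hb : 1 + a * (-(1/(x+1))) ≤ (1 + -(1/(x+1))) ^ a :=
        one_add_mul_self_le_rpow_one_add hs ha1
      have he : 1 + -(1/(x+1)) = x/(x+1) := by field_simp; ring
      have hmvt : (x+1)^a - x^a ≤ a * (x+1)^(a-1) := by
        have h2 : ((x+1):ℝ)^a * (1 - a/(x+1)) ≤ (x+1)^a * (x/(x+1))^a := by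
          apply mul_le_mul_of_nonneg_left _ (Real.rpow_nonneg hx10.le a)
          rw [← he]
          convert hb using 1
          · rfl
          · ring
        have h3 : (x+1)^a * (x/(x+1))^a = x^a := by
          rw [Real.div_rpow hx0.le hx10.le]
          field_simp
        have h4 : (x+1)^(a-1) = (x+1)^a / (x+1) := by
          rw [Real.rpow_sub hx10, Real.rpow_one]
        have h5 : (x+1)^a * (a/(x+1)) = a * (x+1)^(a-1) := by
          rw [h4]; ring
        have h7 : (x+1)^a * (1 - a/(x+1)) ≤ x^a := by rw [← h3]; exact h2
        have h8 : (x+1)^a * (1 - a/(x+1)) = (x+1)^a - a * (x+1)^(a-1) := by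
          rw [← h5]; ring
        rw [h8] at h7
        linarith
      have hpow1 : (x+1)^(a-1) ≤ 2^(a-1) * x^(a-1) := by
        have h1 : (x+1:ℝ) ≤ 2*x := by linarith
        calc (x+1)^(a-1) ≤ (2*x)^(a-1) := Real.rpow_le_rpow hx10.le h1 (by linarith)
        _ = 2^(a-1) * x^(a-1) := Real.mul_rpow (by norm_num) hx0.le
      have hxam1 : (1:ℝ) ≤ x^(a-1) := by
        calc (1:ℝ) = 1^(a-1) := (Real.one_rpow _).symm
        _ ≤ x^(a-1) := Real.rpow_le_rpow zero_le_one (by linarith) (by linarith)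
      have h2a : (0:ℝ) ≤ 2^(a-1) := Real.rpow_nonneg (by norm_num) _
      have hC0 : (0:ℝ) ≤ a*2^(a-1)+1 := by positivity
      have hN : (nk (k+1):ℝ) - nk k ≤ (a*2^(a-1)+1) * x^(a-1) := by
        have h9 : (nk (k+1):ℝ) ≤ (x+1)^a + 1 := by
          have h9' := hupp (k+1)
          push_cast at h9' ⊢
          linarith
        have h10 : x^a < (nk k : ℝ) := hlow k
        have h11 : a * (x+1)^(a-1) ≤ a*2^(a-1)*x^(a-1) := by
          have := mul_le_mul_of_nonneg_left hpow1 ha0.le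
          linarith [this]
        nlinarith
      have hWpos : (0:ℝ) < x^(a*(1-δ)) := Real.rpow_pos_of_pos hx0 _
      have hN0 : (0:ℝ) ≤ (nk (k+1):ℝ) - nk k := by
        have h0 := hsm.monotone (Nat.le_succ k)
        have h1 : (nk k : ℝ) ≤ (nk (k+1) : ℝ) := by exact_mod_cast h0
        linarith
      have hdiv : ((nk (k+1):ℝ) - nk k) / W (nk k) ≤ (a*2^(a-1)+1) * x^(a*δ-1) := by
        have h13 : ((nk (k+1):ℝ) - nk k) / W (nk k) ≤ ((a*2^(a-1)+1) * x^(a-1)) / (x^(a*(1-δ))) :=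
          div_le_div₀ (by positivity) hN hWpos hWlb
        have h14 : ((a*2^(a-1)+1) * x^(a-1)) / (x^(a*(1-δ))) = (a*2^(a-1)+1) * x^(a*δ-1) := by
          rw [mul_div_assoc, ← Real.rpow_sub hx0]
          congr 1
          ring
        rw [h14] at h13
        exact h13
      have hfin : (((nk (k+1):ℝ) - (nk k : ℝ)) / W (nk k)) ^ p ≤ ((a*2^(a-1)+1) * x^(a*δ-1)) ^ p :=
        Real.rpow_le_rpow (div_nonneg hN0 (hW0 _)) hdiv hp0.le
      have h15 : ((a*2^(a-1)+1) * x^(a*δ-1)) ^ p = (a*2^(a-1)+1)^p * x^(-r) := by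
        rw [Real.mul_rpow hC0 (Real.rpow_nonneg hx0.le _), ← Real.rpow_mul hx0.le]
        congr 1
        rw [hrdef, hadef]
        field_simp
        ring
      rw [h15] at hfin
      exact hfin
end

section
/- Let p > 1, ε > 0, and let (G_n) be a weight satisfying ∑_k 1/(G_k)^{pε} < ∞. Define W_n = (G_n)^{ε+1}. Then (W_n) is p-admissible with respect to (G_n); a witnessing sequence is n_1 = 1, n_{k+1} = ⌊G_{n_k}⌋ + n_k + 1. -/
open Filter Finset

/-- Example A.4 of the paper. If `∑_k 1/G_k^{pε} < ∞` and
`W_n = G_n^{ε+1}`, then `(W n)` is `p`-admissible w.r.t. `(G n)`, witnessed by the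
sequence `n_1 = 1`, `n_{k+1} = ⌊G_{n_k}⌋ + n_k + 1`. -/
theorem stmt11 (p ε : ℝ) (hp : 1 < p) (hε : 0 < ε)
    (G : ℕ → ℝ) (hGmono : Monotone G) (hG1 : 1 ≤ G 1) (hGtop : Tendsto G atTop atTop)
    (hGsum : Summable (fun k : ℕ => 1 / (G (k + 1)) ^ (p * ε)))
    (W : ℕ → ℝ) (hW : ∀ n, W n = (G n) ^ (ε + 1))
    (nk : ℕ → ℕ) (hnk0 : nk 0 = 1)
    (hnkrec : ∀ k, nk (k + 1) = ⌊G (nk k)⌋₊ + nk k + 1) :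
    StrictMono nk ∧
      Summable (fun k => (G (nk k) / W (nk k)) ^ p) ∧
      Summable (fun k => (((nk (k + 1) : ℝ) - (nk k : ℝ)) / W (nk k)) ^ p) := by
  have hp0 : (0:ℝ) < p := lt_trans one_pos hp
  have hmono : StrictMono nk := strictMono_nat_of_lt_succ fun k => by
    rw [hnkrec]; omega
  have hnkk : ∀ k, k + 1 ≤ nk k := by
    intro k
    induction k with
    | zero => omega
    | succ n ih => have := hmono (show n < n + 1 by omega); omega
  have hg1 : ∀ k, 1 ≤ G (nk k) := fun k => hG1.trans (hGmono (by have := hnkk k; omega))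
  have hgpos : ∀ k, (0:ℝ) < G (nk k) := fun k => lt_of_lt_of_le one_pos (hg1 k)
  have hGk1 : ∀ k : ℕ, (0:ℝ) < G (k + 1) := fun k =>
    lt_of_lt_of_le one_pos (hG1.trans (hGmono (by omega)))
  have hGle : ∀ k : ℕ, G (k + 1) ≤ G (nk k) := fun k => hGmono (hnkk k)
  -- key identity
  have heq : ∀ k, (G (nk k) / W (nk k)) ^ p = 1 / G (nk k) ^ (p * ε) := by
    intro k
    rw [hW]
    have h1 : G (nk k) / G (nk k) ^ (ε + 1) = G (nk k) ^ (-ε) := by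
      rw [show (-ε) = 1 - (ε + 1) by ring, Real.rpow_sub (hgpos k), Real.rpow_one]
    rw [h1, ← Real.rpow_mul (hgpos k).le]
    rw [show (-ε) * p = -(p * ε) by ring, Real.rpow_neg (hgpos k).le, one_div]
  -- summability of the first series
  have hsum1 : Summable (fun k => (G (nk k) / W (nk k)) ^ p) := by
    apply Summable.of_nonneg_of_le _ _ hGsum
    · intro k
      rw [heq]
      exact div_nonneg zero_le_one (Real.rpow_nonneg (hgpos k).le _)
    · intro k
      rw [heq]
      apply one_div_le_one_div_of_le (Real.rpow_pos_of_pos (hGk1 k) _)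
      exact Real.rpow_le_rpow (hGk1 k).le (hGle k) (by positivity)
  refine ⟨hmono, hsum1, ?_⟩
  -- second series
  have hWpos : ∀ k, (0:ℝ) < W (nk k) := fun k => by
    rw [hW]; exact Real.rpow_pos_of_pos (hgpos k) _
  refine Summable.of_nonneg_of_le ?_ ?_ (hsum1.mul_left ((2:ℝ) ^ p))
  · intro k
    apply Real.rpow_nonneg
    apply div_nonneg _ (hWpos k).le
    have := hmono (Nat.lt_succ_self k)
    have : (nk k : ℝ) ≤ nk (k + 1) := by exact_mod_cast this.le
    linarith
  · intro k
    have hx : ((nk (k + 1) : ℝ) - (nk k : ℝ)) ≤ 2 * G (nk k) := by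
      have hcast : (nk (k + 1) : ℝ) = (⌊G (nk k)⌋₊ : ℝ) + (nk k : ℝ) + 1 := by
        rw [hnkrec]; push_cast; ring
      have hfl : (⌊G (nk k)⌋₊ : ℝ) ≤ G (nk k) := Nat.floor_le (hgpos k).le
      have := hg1 k
      linarith
    have hx0 : (0:ℝ) ≤ ((nk (k + 1) : ℝ) - (nk k : ℝ)) := by
      have := hmono (Nat.lt_succ_self k)
      have : (nk k : ℝ) ≤ nk (k + 1) := by exact_mod_cast this.le
      linarith
    calc (((nk (k + 1) : ℝ) - (nk k : ℝ)) / W (nk k)) ^ p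
        ≤ (2 * G (nk k) / W (nk k)) ^ p := by
          apply Real.rpow_le_rpow (div_nonneg hx0 (hWpos k).le) _ hp0.le
          gcongr
          exact (hWpos k).le
      _ = (2:ℝ) ^ p * ((G (nk k) / W (nk k)) ^ p) := by
          rw [mul_div_assoc, Real.mul_rpow (by norm_num) (div_nonneg (hgpos k).le (hWpos k).le)]
end
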